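/- arXiv:1611.03395 — 11 statements merged into one kernel-verified Lean document; each statement's English description precedes it below -/
import Mathlib

section
/- Let (d_n), (ε_n), (λ_n) be sequences of nonnegative real numbers such that for some N and all n ≥ N one has d_{n+1} ≤ λ_n · max(d_n, ε_n). Assume that sup over all pairs k ≤ n of the products ∏_{i=k}^n λ_i is finite, and that for every fixed k the products ∏_{i=k}^n λ_i tend to 0 as n → ∞. Set q_k = sup_{n ≥ k} ∏_{i=k}^n λ_i. Then limsup_{k→∞} (d_k · q_k) ≤ limsup_{k→∞} (ε_k · q_k), where the limsups are taken in [0,∞]. -/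
/-!
Unrolling the recursion from a late index `k` gives, for `n ≥ k`,
`q n * d n ≤ max (q n * ∏_{[k,n)} λ * d k) (max_{k ≤ j < n} q n * ∏_{[j,n)} λ * ε j)`.
Splitting a product at `n` shows `∏_{[j,n)} λ * q n ≤ q j`, so the second term is at most
`sup_{j ≥ k} ε j * q j`, while the first is at most `C * ∏_{[k,n)} λ * d k`, which tends to `0`.
-/

open Filter Finset

theorem limsup_ofReal_le_limsup_ofReal {α : Type*} {f : Filter α} {u v : α → ℝ}
    (h : ∀ r : ℝ, 0 < r → (∀ᶠ x in f, v x ≤ r) → ∀ᶠ x in f, u x ≤ r) :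
    limsup (fun x => ENNReal.ofReal (u x)) f ≤ limsup (fun x => ENNReal.ofReal (v x)) f := by
  refine le_of_forall_gt_imp_ge_of_dense fun c hc => ?_
  rcases eq_or_ne c ⊤ with rfl | hc_top
  · exact le_top
  have hr : 0 < c.toReal := ENNReal.toReal_pos (pos_of_gt hc).ne' hc_top
  have hv : ∀ᶠ x in f, v x ≤ c.toReal := (eventually_lt_of_limsup_lt hc).mono fun x hx =>
    (ENNReal.ofReal_le_iff_le_toReal hc_top).mp hx.le
  calc limsup (fun x => ENNReal.ofReal (u x)) f ≤ ENNReal.ofReal c.toReal :=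
        limsup_le_of_le (by isBoundedDefault) <|
          (h _ hr hv).mono fun x hx => ENNReal.ofReal_le_ofReal hx
    _ = c := ENNReal.ofReal_toReal hc_top

section Products

variable {l : ℕ → ℝ}

theorem prod_Icc_le_iSup_prod_Icc {k n : ℕ}
    (hbdd : BddAbove (Set.range fun m : ℕ => ∏ i ∈ Icc k (k + m), l i)) (hkn : k ≤ n) :
    ∏ i ∈ Icc k n, l i ≤ ⨆ m : ℕ, ∏ i ∈ Icc k (k + m), l i := by
  simpa only [Nat.add_sub_cancel' hkn] using le_ciSup hbdd (n - k)

theorem prod_Ico_mul_iSup_prod_Icc_le (hl : ∀ n, 0 ≤ l n) {j n : ℕ}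
    (hbdd : BddAbove (Set.range fun m : ℕ => ∏ i ∈ Icc j (j + m), l i)) (hjn : j ≤ n) :
    (∏ i ∈ Ico j n, l i) * ⨆ m : ℕ, ∏ i ∈ Icc n (n + m), l i ≤
      ⨆ m : ℕ, ∏ i ∈ Icc j (j + m), l i := by
  rw [Real.mul_iSup_of_nonneg (prod_nonneg fun i _ => hl i)]
  refine ciSup_le fun m => ?_
  rw [← Ico_add_one_right_eq_Icc, prod_Ico_consecutive _ hjn (by omega), Ico_add_one_right_eq_Icc]
  exact prod_Icc_le_iSup_prod_Icc hbdd (by omega)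

theorem tendsto_prod_Ico_of_tendsto_prod_Icc {k : ℕ}
    (h : Tendsto (fun n => ∏ i ∈ Icc k n, l i) atTop (nhds 0)) :
    Tendsto (fun n => ∏ i ∈ Ico k n, l i) atTop (nhds 0) :=
  (tendsto_add_atTop_iff_nat 1).mp <| by simpa only [Ico_add_one_right_eq_Icc] using h

end Products

theorem mul_le_max_of_le_mul_max {d ε l : ℕ → ℝ} (hl : ∀ n, 0 ≤ l n) {k : ℕ}
    (hrec : ∀ j, k ≤ j → d (j + 1) ≤ l j * max (d j) (ε j)) {B : ℝ} {n : ℕ} (hkn : k ≤ n)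
    {c : ℝ} (hc : 0 ≤ c) (hB : ∀ j, k ≤ j → j < n → c * (∏ i ∈ Ico j n, l i) * ε j ≤ B) :
    c * d n ≤ max (c * (∏ i ∈ Ico k n, l i) * d k) B := by
  induction n, hkn using Nat.le_induction generalizing c with
  | base => simp
  | succ n hkn ih =>
    have hcl : 0 ≤ c * l n := mul_nonneg hc (hl n)
    have hprod : ∀ j ≤ n, c * ∏ i ∈ Ico j (n + 1), l i = c * l n * ∏ i ∈ Ico j n, l i :=
      fun j hj => by rw [prod_Ico_succ_top hj]; ring
    have hd : c * l n * d n ≤ max (c * (∏ i ∈ Ico k (n + 1), l i) * d k) B := by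
      rw [hprod k hkn]
      exact ih hcl fun j hkj hjn => by
        simpa only [hprod j hjn.le] using hB j hkj (Nat.lt_succ_of_lt hjn)
    have hε : c * l n * ε n ≤ B := by
      simpa [hprod n le_rfl] using hB n hkn (Nat.lt_succ_self n)
    calc c * d (n + 1) ≤ c * (l n * max (d n) (ε n)) := mul_le_mul_of_nonneg_left (hrec n hkn) hc
      _ = max (c * l n * d n) (c * l n * ε n) := by rw [← mul_assoc, mul_max_of_nonneg _ _ hcl]
      _ ≤ _ := max_le hd (hε.trans (le_max_right _ _))

theorem stmt_0_general (d ε l : ℕ → ℝ)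
    (hε : ∀ n, 0 ≤ ε n) (hl : ∀ n, 0 ≤ l n)
    (N : ℕ) (hrec : ∀ n, N ≤ n → d (n + 1) ≤ l n * max (d n) (ε n))
    (C : ℝ) (hC : ∀ k n, k ≤ n → ∏ i ∈ Finset.Icc k n, l i ≤ C)
    (hlim : ∀ k, Tendsto (fun n => ∏ i ∈ Finset.Icc k n, l i) atTop (nhds 0))
    (q : ℕ → ℝ) (hq : ∀ k, q k = ⨆ n : ℕ, ∏ i ∈ Finset.Icc k (k + n), l i) :
    Filter.limsup (fun k => ENNReal.ofReal (d k * q k)) atTop ≤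
      Filter.limsup (fun k => ENNReal.ofReal (ε k * q k)) atTop := by
  have hprod_nonneg (s : Finset ℕ) : 0 ≤ ∏ i ∈ s, l i := prod_nonneg fun i _ => hl i
  have hbdd (k : ℕ) : BddAbove (Set.range fun m : ℕ => ∏ i ∈ Icc k (k + m), l i) :=
    ⟨C, by rintro _ ⟨m, rfl⟩; exact hC k (k + m) (Nat.le_add_right k m)⟩
  have hq_nonneg (k : ℕ) : 0 ≤ q k := hq k ▸ Real.iSup_nonneg fun m => hprod_nonneg _
  have hq_le (k : ℕ) : q k ≤ C := hq k ▸ ciSup_le fun m => hC k (k + m) (Nat.le_add_right k m)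
  refine limsup_ofReal_le_limsup_ofReal fun r hr hεr => ?_
  obtain ⟨K, hK⟩ := eventually_atTop.mp hεr
  set k := max K N
  have htransient : Tendsto (fun n => q n * (∏ i ∈ Ico k n, l i) * d k) atTop (nhds 0) := by
    have hC_prod := (tendsto_prod_Ico_of_tendsto_prod_Icc (hlim k)).const_mul C
    rw [mul_zero] at hC_prod
    simpa only [zero_mul] using (squeeze_zero (fun n => mul_nonneg (hq_nonneg n) (hprod_nonneg _))
      (fun n => mul_le_mul_of_nonneg_right (hq_le n) (hprod_nonneg _)) hC_prod).mul_const (d k)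
  filter_upwards [eventually_ge_atTop k, htransient.eventually (eventually_le_nhds hr)]
    with n hkn hn
  have hεq (j : ℕ) (hkj : k ≤ j) (hjn : j < n) : q n * (∏ i ∈ Ico j n, l i) * ε j ≤ r :=
    calc q n * (∏ i ∈ Ico j n, l i) * ε j ≤ q j * ε j := by
          rw [mul_comm (q n), hq n, hq j]
          exact mul_le_mul_of_nonneg_right
            (prod_Ico_mul_iSup_prod_Icc_le hl (hbdd j) hjn.le) (hε j)
      _ ≤ r := by rw [mul_comm]; exact hK j (le_of_max_le_left hkj)
  rw [mul_comm]
  exact (mul_le_max_of_le_mul_max hl (fun j hj => hrec j (le_of_max_le_right hj)) hkn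
    (hq_nonneg n) hεq).trans (max_le hn le_rfl)

/-- Let `(d_n)`, `(ε_n)`, `(λ_n)` be nonnegative real sequences with
`d_{n+1} ≤ λ_n · max(d_n, ε_n)` for all `n ≥ N`, such that the products `∏_{i=k}^n λ_i`
are uniformly bounded and, for each fixed `k`, tend to `0` as `n → ∞`.  With
`q_k = sup_{n ≥ k} ∏_{i=k}^n λ_i`, one has
`limsup (d_k q_k) ≤ limsup (ε_k q_k)` in `[0,∞]`. -/
theorem stmt_0 (d ε l : ℕ → ℝ)
    (hd : ∀ n, 0 ≤ d n) (hε : ∀ n, 0 ≤ ε n) (hl : ∀ n, 0 ≤ l n)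
    (N : ℕ) (hrec : ∀ n, N ≤ n → d (n + 1) ≤ l n * max (d n) (ε n))
    (C : ℝ) (hC : ∀ k n, k ≤ n → ∏ i ∈ Finset.Icc k n, l i ≤ C)
    (hlim : ∀ k, Tendsto (fun n => ∏ i ∈ Finset.Icc k n, l i) atTop (nhds 0))
    (q : ℕ → ℝ) (hq : ∀ k, q k = ⨆ n : ℕ, ∏ i ∈ Finset.Icc k (k + n), l i) :
    Filter.limsup (fun k => ENNReal.ofReal (d k * q k)) atTop ≤
      Filter.limsup (fun k => ENNReal.ofReal (ε k * q k)) atTop :=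
  stmt_0_general d ε l hε hl N hrec C hC hlim q hq
end

section
/- Let (μ_n)_{n≥0} be a normal sequence. Let (x_n)_{n≥0} and (b_n)_{n≥0} be sequences of nonnegative real numbers satisfying the recursion x_{n+1} = (1 − μ_n) x_n + μ_n b_n for all n ≥ 0. Then liminf_{n→∞} b_n ≤ liminf_{n→∞} x_n and limsup_{n→∞} x_n ≤ limsup_{n→∞} b_n (limits taken in [0,∞]). -/
/-!
Fix a level `c` that `b` eventually stays below, from index `N` on. The recursion makes
`x - c` contract by the factor `1 - μ n` from `N` on, so
`x n - c ≤ (∏_{N ≤ i < n} (1 - μ i)) (x N - c)`, and the product is at most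
`exp (-∑_{N ≤ i < n} μ i)`, which tends to `0` because `∑ μ = ∞`. Hence `x` eventually
stays below every `d > c`; the lower bound follows by applying this to `-x` and `-b`.
Passing to `[0, ∞]` only needs levels strictly between two extended reals, which are finite.
-/

open Filter Finset

/-- A sequence `(μ_n)` is *normal* if `μ_0 = 1`, `μ_n ∈ (0,1)` for `n ≥ 1`,
`∑ μ_n = ∞`, and `μ_n → 0`. -/
def NormalSeq (μ : ℕ → ℝ) : Prop :=
  μ 0 = 1 ∧ (∀ n, 1 ≤ n → μ n ∈ Set.Ioo (0 : ℝ) 1) ∧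
    Filter.Tendsto (fun n => ∑ i ∈ Finset.range n, μ i) Filter.atTop Filter.atTop ∧
    Filter.Tendsto μ Filter.atTop (nhds 0)

open Topology

theorem NormalSeq.nonneg {μ : ℕ → ℝ} (hμ : NormalSeq μ) (n : ℕ) : 0 ≤ μ n := by
  rcases Nat.eq_zero_or_pos n with rfl | hn
  · simp [hμ.1]
  · exact (hμ.2.1 n hn).1.le

theorem NormalSeq.le_one {μ : ℕ → ℝ} (hμ : NormalSeq μ) (n : ℕ) : μ n ≤ 1 := by
  rcases Nat.eq_zero_or_pos n with rfl | hn
  · simp [hμ.1]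
  · exact (hμ.2.1 n hn).2.le

theorem tendsto_prod_Ico_one_sub_atTop_nhds_zero {μ : ℕ → ℝ} (h1 : ∀ n, μ n ≤ 1)
    (hsum : Tendsto (fun n => ∑ i ∈ range n, μ i) atTop atTop) (N : ℕ) :
    Tendsto (fun n => ∏ i ∈ Ico N n, (1 - μ i)) atTop (𝓝 0) := by
  have htail : Tendsto (fun n => ∑ i ∈ Ico N n, μ i) atTop atTop := by
    refine (tendsto_atTop_add_const_right _ (-∑ i ∈ range N, μ i) hsum).congr' ?_
    filter_upwards [eventually_ge_atTop N] with n hn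
    rw [sum_Ico_eq_sub _ hn, sub_eq_add_neg]
  refine squeeze_zero (fun n => prod_nonneg fun i _ => sub_nonneg.2 (h1 i)) (fun n => ?_)
    (Real.tendsto_exp_neg_atTop_nhds_zero.comp htail)
  calc ∏ i ∈ Ico N n, (1 - μ i)
      ≤ ∏ i ∈ Ico N n, Real.exp (-μ i) :=
        prod_le_prod (fun i _ => sub_nonneg.2 (h1 i)) fun i _ => Real.one_sub_le_exp_neg _
    _ = Real.exp (-∑ i ∈ Ico N n, μ i) := by rw [← sum_neg_distrib, Real.exp_sum]

theorem le_prod_Ico_mul_of_le_mul {a y : ℕ → ℝ} {N : ℕ} (ha : ∀ n, 0 ≤ a n)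
    (hy : ∀ n, N ≤ n → y (n + 1) ≤ a n * y n) {n : ℕ} (hn : N ≤ n) :
    y n ≤ (∏ i ∈ Ico N n, a i) * y N := by
  induction n, hn using Nat.le_induction with
  | base => simp
  | succ n hn ih =>
    calc y (n + 1) ≤ a n * y n := hy n hn
      _ ≤ a n * ((∏ i ∈ Ico N n, a i) * y N) := mul_le_mul_of_nonneg_left ih (ha n)
      _ = (∏ i ∈ Ico N (n + 1), a i) * y N := by rw [prod_Ico_succ_top hn]; ring

section Relaxation

variable {μ x b : ℕ → ℝ} (h0 : ∀ n, 0 ≤ μ n) (h1 : ∀ n, μ n ≤ 1)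
  (hsum : Tendsto (fun n => ∑ i ∈ range n, μ i) atTop atTop)
  (hrec : ∀ n, x (n + 1) = (1 - μ n) * x n + μ n * b n)
include h0 h1 hsum hrec

theorem eventually_lt_of_eventually_forcing_le {c d : ℝ} (hbc : ∀ᶠ n in atTop, b n ≤ c)
    (hcd : c < d) : ∀ᶠ n in atTop, x n < d := by
  obtain ⟨N, hN⟩ := eventually_atTop.1 hbc
  have hcontract : ∀ n, N ≤ n → x (n + 1) - c ≤ (1 - μ n) * (x n - c) := by
    intro n hn
    rw [hrec n]
    nlinarith [h0 n, hN n hn]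
  have hsmall : ∀ᶠ n in atTop, (∏ i ∈ Ico N n, (1 - μ i)) * (x N - c) < d - c := by
    refine ((tendsto_prod_Ico_one_sub_atTop_nhds_zero h1 hsum N).mul_const _).eventually_lt_const ?_
    simpa using hcd
  filter_upwards [hsmall, eventually_ge_atTop N] with n hsmall hn
  have := le_prod_Ico_mul_of_le_mul (y := fun n => x n - c) (fun i => sub_nonneg.2 (h1 i)) hcontract hn
  linarith

theorem eventually_gt_of_eventually_forcing_ge {c d : ℝ} (hbc : ∀ᶠ n in atTop, c ≤ b n)
    (hdc : d < c) : ∀ᶠ n in atTop, d < x n := by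
  have hneg : ∀ᶠ n in atTop, -x n < -d :=
    eventually_lt_of_eventually_forcing_le (x := fun n => -x n) (b := fun n => -b n) h0 h1 hsum
      (fun n => by rw [hrec n]; ring) (hbc.mono fun n hn => neg_le_neg hn) (neg_lt_neg hdc)
  exact hneg.mono fun n hn => neg_lt_neg_iff.1 hn

end Relaxation

namespace ENNReal

variable {α : Type*} {l : Filter α} {x b : α → ℝ}

theorem limsup_ofReal_le_limsup_ofReal
    (h : ∀ c d : ℝ, (∀ᶠ n in l, b n ≤ c) → c < d → ∀ᶠ n in l, x n < d) :
    limsup (fun n => ENNReal.ofReal (x n)) l ≤ limsup (fun n => ENNReal.ofReal (b n)) l := by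
  rw [limsup_le_iff']
  intro y hy
  obtain ⟨z, hz, hzy⟩ := exists_between hy
  obtain ⟨z', hzz', hz'y⟩ := exists_between hzy
  have hb : ∀ᶠ n in l, b n ≤ z.toReal := (eventually_lt_of_limsup_lt hz).mono fun n hn =>
    (ofReal_le_iff_le_toReal hzz'.ne_top).1 hn.le
  filter_upwards [h _ _ hb (toReal_strict_mono hz'y.ne_top hzz')] with n hn
  exact ((ofReal_le_iff_le_toReal hz'y.ne_top).2 hn.le).trans hz'y.le

theorem liminf_ofReal_le_liminf_ofReal
    (h : ∀ c d : ℝ, (∀ᶠ n in l, c ≤ b n) → d < c → ∀ᶠ n in l, d < x n) :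
    liminf (fun n => ENNReal.ofReal (b n)) l ≤ liminf (fun n => ENNReal.ofReal (x n)) l := by
  rw [le_liminf_iff]
  intro y hy
  obtain ⟨z, hyz, hz⟩ := exists_between hy
  have hb : ∀ᶠ n in l, z.toReal ≤ b n := (eventually_lt_of_lt_liminf hz).mono fun n hn =>
    ((lt_ofReal_iff_toReal_lt hz.ne_top).1 hn).le
  filter_upwards [h _ _ hb (toReal_strict_mono hz.ne_top hyz)] with n hn
  exact (lt_ofReal_iff_toReal_lt (hyz.trans hz).ne_top).2 hn

end ENNReal

theorem stmt_1_general (μ x b : ℕ → ℝ) (hμ : NormalSeq μ)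
    (hrec : ∀ n, x (n + 1) = (1 - μ n) * x n + μ n * b n) :
    Filter.liminf (fun n => ENNReal.ofReal (b n)) Filter.atTop ≤
        Filter.liminf (fun n => ENNReal.ofReal (x n)) Filter.atTop ∧
      Filter.limsup (fun n => ENNReal.ofReal (x n)) Filter.atTop ≤
        Filter.limsup (fun n => ENNReal.ofReal (b n)) Filter.atTop :=
  ⟨ENNReal.liminf_ofReal_le_liminf_ofReal fun _ _ =>
      eventually_gt_of_eventually_forcing_ge hμ.nonneg hμ.le_one hμ.2.2.1 hrec,
    ENNReal.limsup_ofReal_le_limsup_ofReal fun _ _ =>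
      eventually_lt_of_eventually_forcing_le hμ.nonneg hμ.le_one hμ.2.2.1 hrec⟩

/-- For a normal sequence `(μ_n)` and nonnegative sequences `(x_n)`, `(b_n)`
satisfying `x_{n+1} = (1 − μ_n) x_n + μ_n b_n`, one has
`liminf b ≤ liminf x` and `limsup x ≤ limsup b` in `[0,∞]`. -/
theorem stmt_1 (μ x b : ℕ → ℝ) (hμ : NormalSeq μ)
    (hx : ∀ n, 0 ≤ x n) (hb : ∀ n, 0 ≤ b n)
    (hrec : ∀ n, x (n + 1) = (1 - μ n) * x n + μ n * b n) :
    Filter.liminf (fun n => ENNReal.ofReal (b n)) Filter.atTop ≤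
        Filter.liminf (fun n => ENNReal.ofReal (x n)) Filter.atTop ∧
      Filter.limsup (fun n => ENNReal.ofReal (x n)) Filter.atTop ≤
        Filter.limsup (fun n => ENNReal.ofReal (b n)) Filter.atTop :=
  stmt_1_general μ x b hμ hrec
end

section
/- Let (μ_n)_{n≥0} be a normal sequence, and let (x_n)_{n≥0} and (b_n)_{n≥0} be real sequences such that for some N and all n ≥ N one has x_{n+1} = (1 − μ_n) x_n + μ_n b_n. Then the series ∑_{n≥0} μ_n b_n converges if and only if x_n → 0 as n → ∞ and the series ∑_{n≥0} μ_n x_n converges. -/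
/-!
Writing `S m = ∑_{n<m} μ_n b_n` and `F m = ∑_{n<m} μ_n x_n`, the recurrence says
`x_{n+1} - x_n = μ_n b_n - μ_n x_n`, so `x + F - S` is eventually constant. Hence `S` converges
whenever `x → 0` and `F` converges, and conversely, once `x → 0` is known, `F` converges with `S`.
For that remaining step, `y_n = x_n + (s - S n)` with `s = lim S` satisfies
`y_{n+1} = (1 - μ_n) y_n + μ_n (s - S n)`, a convex combination of `y_n` and a null sequence;
since `∏ (1 - μ_k) ≤ exp (-∑ μ_k) → 0`, this forces `y → 0`, hence `x → 0`.
-/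

open Filter Finset

namespace NormalSeq

variable {μ : ℕ → ℝ}

theorem nonneg_s2 (hμ : NormalSeq μ) (n : ℕ) : 0 ≤ μ n := by
  rcases n.eq_zero_or_pos with rfl | hn
  · exact hμ.1 ▸ zero_le_one
  · exact (hμ.2.1 n hn).1.le

theorem le_one_s2 (hμ : NormalSeq μ) (n : ℕ) : μ n ≤ 1 := by
  rcases n.eq_zero_or_pos with rfl | hn
  · exact hμ.1.le
  · exact (hμ.2.1 n hn).2.le

end NormalSeq

section Recurrence

variable {μ : ℕ → ℝ}

theorem tendsto_prod_Ico_one_sub (h1 : ∀ n, μ n ≤ 1)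
    (hsum : Tendsto (fun n => ∑ i ∈ range n, μ i) atTop atTop) (M : ℕ) :
    Tendsto (fun n => ∏ k ∈ Ico M n, (1 - μ k)) atTop (nhds 0) := by
  have hexp : Tendsto (fun n => Real.exp (-(∑ i ∈ range n, μ i - ∑ i ∈ range M, μ i)))
      atTop (nhds 0) :=
    Real.tendsto_exp_atBot.comp <| tendsto_neg_atTop_atBot.comp <|
      tendsto_atTop_add_const_right atTop _ hsum
  refine tendsto_of_tendsto_of_tendsto_of_le_of_le' tendsto_const_nhds hexp
    (Eventually.of_forall fun n => prod_nonneg fun k _ => sub_nonneg.2 (h1 k)) ?_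
  filter_upwards [eventually_ge_atTop M] with n hn
  calc ∏ k ∈ Ico M n, (1 - μ k)
      ≤ ∏ k ∈ Ico M n, Real.exp (-μ k) :=
        prod_le_prod (fun k _ => sub_nonneg.2 (h1 k)) fun k _ => by
          simpa [sub_eq_neg_add] using Real.add_one_le_exp (-μ k)
    _ = Real.exp (-(∑ i ∈ range n, μ i - ∑ i ∈ range M, μ i)) := by
        rw [← Real.exp_sum, sum_neg_distrib, sum_Ico_eq_sub _ hn]

theorem le_prod_Ico_one_sub_mul {d : ℕ → ℝ} {M : ℕ} (h1 : ∀ n, μ n ≤ 1)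
    (hd : ∀ n, M ≤ n → d (n + 1) ≤ (1 - μ n) * d n) :
    ∀ n, M ≤ n → d n ≤ (∏ k ∈ Ico M n, (1 - μ k)) * d M := by
  intro n hn
  induction n, hn using Nat.le_induction with
  | base => simp
  | succ n hn ih =>
    calc d (n + 1) ≤ (1 - μ n) * d n := hd n hn
      _ ≤ (1 - μ n) * ((∏ k ∈ Ico M n, (1 - μ k)) * d M) :=
        mul_le_mul_of_nonneg_left ih (sub_nonneg.2 (h1 n))
      _ = (∏ k ∈ Ico M (n + 1), (1 - μ k)) * d M := by
        rw [prod_Ico_succ_top hn]; ring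

theorem tendsto_zero_of_le_one_sub_mul_add_mul {a c : ℕ → ℝ} {N : ℕ} (h0 : ∀ n, 0 ≤ μ n)
    (h1 : ∀ n, μ n ≤ 1) (hsum : Tendsto (fun n => ∑ i ∈ range n, μ i) atTop atTop)
    (ha : ∀ n, 0 ≤ a n) (hc : Tendsto c atTop (nhds 0))
    (hrec : ∀ n, N ≤ n → a (n + 1) ≤ (1 - μ n) * a n + μ n * c n) :
    Tendsto a atTop (nhds 0) := by
  refine tendsto_order.2 ⟨fun r hr => Eventually.of_forall fun n => hr.trans_le (ha n),
    fun ε hε => ?_⟩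
  obtain ⟨M, hM⟩ := eventually_atTop.1 <|
    (hc.eventually (gt_mem_nhds (half_pos hε))).and (eventually_ge_atTop N)
  have hcontract : ∀ n, M ≤ n → a (n + 1) - ε / 2 ≤ (1 - μ n) * (a n - ε / 2) := fun n hn => by
    obtain ⟨hcn, hNn⟩ := hM n hn
    nlinarith [hrec n hNn, mul_le_mul_of_nonneg_left hcn.le (h0 n)]
  have hbound : Tendsto (fun n => ε / 2 + (∏ k ∈ Ico M n, (1 - μ k)) * (a M - ε / 2)) atTop
      (nhds (ε / 2)) := by
    simpa using tendsto_const_nhds.add ((tendsto_prod_Ico_one_sub h1 hsum M).mul_const _)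
  filter_upwards [eventually_ge_atTop M, hbound.eventually (gt_mem_nhds (half_lt_self hε))]
    with n hn hlt
  linarith [le_prod_Ico_one_sub_mul (d := fun n => a n - ε / 2) h1 hcontract n hn]

variable {x b : ℕ → ℝ} {N : ℕ}

theorem exists_sum_mul_eventuallyEq (hrec : ∀ n, N ≤ n → x (n + 1) = (1 - μ n) * x n + μ n * b n) :
    ∃ C, (fun m => ∑ n ∈ range m, μ n * b n) =ᶠ[atTop]
      fun m => x m + ∑ n ∈ range m, μ n * x n - C := by
  refine ⟨x N + ∑ n ∈ range N, μ n * x n - ∑ n ∈ range N, μ n * b n,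
    eventually_atTop.2 ⟨N, fun m hm => ?_⟩⟩
  induction m, hm using Nat.le_induction with
  | base => ring
  | succ m hm ih =>
    simp only [sum_range_succ, hrec m hm] at ih ⊢
    linarith

theorem tendsto_zero_of_tendsto_sum_mul (h0 : ∀ n, 0 ≤ μ n) (h1 : ∀ n, μ n ≤ 1)
    (hsum : Tendsto (fun n => ∑ i ∈ range n, μ i) atTop atTop)
    (hrec : ∀ n, N ≤ n → x (n + 1) = (1 - μ n) * x n + μ n * b n) {s : ℝ}
    (hs : Tendsto (fun m => ∑ n ∈ range m, μ n * b n) atTop (nhds s)) :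
    Tendsto x atTop (nhds 0) := by
  set r : ℕ → ℝ := fun m => s - ∑ n ∈ range m, μ n * b n
  have hr : Tendsto r atTop (nhds 0) := by simpa using hs.const_sub s
  have hy : ∀ n, N ≤ n → |x (n + 1) + r (n + 1)| ≤ (1 - μ n) * |x n + r n| + μ n * |r n| := by
    intro n hn
    have hstep : x (n + 1) + r (n + 1) = (1 - μ n) * (x n + r n) + μ n * r n := by
      simp only [r, sum_range_succ, hrec n hn]; ring
    calc |x (n + 1) + r (n + 1)| ≤ |(1 - μ n) * (x n + r n)| + |μ n * r n| :=
          hstep ▸ abs_add_le _ _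
      _ = (1 - μ n) * |x n + r n| + μ n * |r n| := by
          rw [abs_mul, abs_mul, abs_of_nonneg (sub_nonneg.2 (h1 n)), abs_of_nonneg (h0 n)]
  have hxr : Tendsto (fun n => x n + r n) atTop (nhds 0) :=
    tendsto_zero_iff_abs_tendsto_zero _ |>.2 <|
      tendsto_zero_of_le_one_sub_mul_add_mul h0 h1 hsum (fun n => abs_nonneg _)
        (by simpa using hr.abs) hy
  simpa using hxr.sub hr

end Recurrence

/-- Let `(μ_n)` be a normal sequence and let `(x_n)`, `(b_n)` be real sequences
with `x_{n+1} = (1 − μ_n) x_n + μ_n b_n` for all `n ≥ N`.  Then `∑ μ_n b_n` converges iff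
`x_n → 0` and `∑ μ_n x_n` converges. -/
theorem stmt_2 (μ x b : ℕ → ℝ) (hμ : NormalSeq μ) (N : ℕ)
    (hrec : ∀ n, N ≤ n → x (n + 1) = (1 - μ n) * x n + μ n * b n) :
    (∃ l : ℝ, Filter.Tendsto (fun m => ∑ n ∈ Finset.range m, μ n * b n) Filter.atTop (nhds l)) ↔
      (Filter.Tendsto x Filter.atTop (nhds 0) ∧
        ∃ l : ℝ, Filter.Tendsto (fun m => ∑ n ∈ Finset.range m, μ n * x n) Filter.atTop
          (nhds l)) := by
  obtain ⟨C, hC⟩ := exists_sum_mul_eventuallyEq hrec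
  constructor
  · rintro ⟨s, hs⟩
    have hx := tendsto_zero_of_tendsto_sum_mul hμ.nonneg_s2 hμ.le_one_s2 hμ.2.2.1 hrec hs
    refine ⟨hx, s + C - 0, ((hs.add_const C).sub hx).congr' ?_⟩
    filter_upwards [hC] with m hm
    linarith
  · rintro ⟨hx, l, hl⟩
    exact ⟨0 + l - C, ((hx.add hl).sub_const C).congr' hC.symm⟩
end

section
/- Let (x_n)_{n≥1} be a sequence of real numbers and (a_n)_{n≥1} a strictly increasing sequence of positive numbers tending to infinity. Then the series ∑_{n≥1} x_n / a_n converges if and only if the sequence (∑_{i=1}^n x_i)/a_n converges to zero and the series ∑_{n≥1} (1/a_n − 1/a_{n+1}) · (∑_{i=1}^n x_i) converges. -/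
/-!
Summation by parts with weights `1 / aₙ` gives
`∑_{n ≤ m} xₙ / aₙ = ∑_{n ≤ m} (1 / aₙ - 1 / aₙ₊₁) Sₙ + Sₘ / aₘ₊₁` for the partial sums `Sₙ` of `x`,
so the two series converge together as soon as `Sₘ / aₘ₊₁ → 0`, which follows from `Sₘ / aₘ → 0`
because `a` increases. Conversely, Kronecker's lemma gives `Sₘ / aₘ → 0` when `∑ xₙ / aₙ` converges:
summing by parts the other way writes `Sₘ / aₘ` as the difference between the partial sums of
`∑ xₙ / aₙ` and their averages with weights `aₙ₊₁ - aₙ`, and both tend to the sum of the series.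
-/

open Filter Finset Topology

theorem Finset.sum_range_mul_by_parts {R : Type*} [CommRing R] (b x : ℕ → R) (m : ℕ) :
    ∑ k ∈ range m, b k * x k =
      ∑ k ∈ range m, (b k - b (k + 1)) * ∑ i ∈ range (k + 1), x i + b m * ∑ i ∈ range m, x i := by
  induction m with
  | zero => simp
  | succ m ih =>
    rw [sum_range_succ, ih, sum_range_succ _ m, sum_range_succ x m]
    ring

theorem Finset.sum_Icc_one_eq_sum_range {M : Type*} [AddCommMonoid M] (f : ℕ → M) (m : ℕ) :
    ∑ n ∈ Icc 1 m, f n = ∑ k ∈ range m, f (k + 1) := by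
  rw [range_eq_Ico, sum_Ico_add' f 0 m 1, zero_add, Ico_add_one_right_eq_Icc]

theorem tendsto_div_nhds_zero_of_le {α : Type*} {l : Filter α} {f a b : α → ℝ}
    (ha : ∀ t, 0 < a t) (hab : ∀ t, a t ≤ b t) (h : Tendsto (fun t => f t / a t) l (𝓝 0)) :
    Tendsto (fun t => f t / b t) l (𝓝 0) := by
  refine squeeze_zero_norm (fun t => ?_) (by simpa using h.abs)
  have hb : 0 < b t := (ha t).trans_le (hab t)
  rw [Real.norm_eq_abs, abs_div, abs_div, abs_of_pos hb, abs_of_pos (ha t)]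
  exact div_le_div_of_nonneg_left (abs_nonneg _) (ha t) (hab t)

theorem tendsto_sum_range_mul_div_sum_range {w u : ℕ → ℝ} {l : ℝ} (hw : 0 ≤ w)
    (hw_top : Tendsto (fun n => ∑ i ∈ range n, w i) atTop atTop) (hu : Tendsto u atTop (𝓝 l)) :
    Tendsto (fun n => (∑ i ∈ range n, w i * u i) / ∑ i ∈ range n, w i) atTop (𝓝 l) := by
  have h_small : (fun i => w i * (u i - l)) =o[atTop] w := by
    simpa using (Asymptotics.isBigO_refl w atTop).mul_isLittleO
      ((Asymptotics.isLittleO_one_iff ℝ).2 (tendsto_sub_nhds_zero_iff.2 hu))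
  have h_avg := ((h_small.sum_range hw hw_top).tendsto_div_nhds_zero).add_const l
  rw [zero_add] at h_avg
  refine h_avg.congr' ?_
  filter_upwards [hw_top.eventually_gt_atTop 0] with n hn
  simp only [mul_sub, sum_sub_distrib, ← sum_mul]
  field_simp
  ring

theorem tendsto_sum_range_sub_mul_div {a u : ℕ → ℝ} {l : ℝ} (ha_mono : Monotone a)
    (ha_top : Tendsto a atTop atTop) (hu : Tendsto u atTop (𝓝 l)) :
    Tendsto (fun n => (∑ i ∈ range n, (a (i + 1) - a i) * u i) / a n) atTop (𝓝 l) := by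
  have h_mass (n : ℕ) : ∑ i ∈ range n, (a (i + 1) - a i) = a n - a 0 := sum_range_sub a n
  have h_mass_top : Tendsto (fun n => ∑ i ∈ range n, (a (i + 1) - a i)) atTop atTop := by
    simp only [h_mass]
    exact tendsto_atTop_add_const_right _ (-a 0) ha_top
  have h_avg := tendsto_sum_range_mul_div_sum_range
    (fun i => sub_nonneg.2 (ha_mono (Nat.le_succ i))) h_mass_top hu
  have h_ratio : Tendsto (fun n => 1 - a 0 / a n) atTop (𝓝 1) := by
    simpa using tendsto_const_nhds.sub (tendsto_const_nhds.div_atTop ha_top)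
  simpa using (h_avg.mul h_ratio).congr' <| by
    filter_upwards [ha_top.eventually_gt_atTop (a 0), ha_top.eventually_gt_atTop 0] with n h0 hpos
    simp only [h_mass]
    field_simp [(sub_pos.2 h0).ne']

/-- **Kronecker's lemma.** -/
theorem tendsto_sum_range_div_of_tendsto_sum_range_div {x a : ℕ → ℝ} {l : ℝ}
    (ha_pos : ∀ n, 0 < a n) (ha_mono : Monotone a) (ha_top : Tendsto a atTop atTop)
    (h : Tendsto (fun n => ∑ i ∈ range n, x i / a i) atTop (𝓝 l)) :
    Tendsto (fun n => (∑ i ∈ range n, x i) / a n) atTop (𝓝 0) := by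
  set P := fun n => ∑ i ∈ range n, x i / a i
  have h_parts (n : ℕ) : (∑ i ∈ range n, x i) / a n =
      P n - (∑ i ∈ range n, (a (i + 1) - a i) * P (i + 1)) / a n := by
    have h := sum_range_mul_by_parts a (fun i => x i / a i) n
    simp only [fun i => mul_div_cancel₀ (x i) (ha_pos i).ne'] at h
    rw [h]
    field_simp [(ha_pos n).ne']
    simp only [← neg_sub (a (_ + 1)), neg_mul, sum_neg_distrib]
    ring
  simpa [h_parts] using
    h.sub (tendsto_sum_range_sub_mul_div ha_mono ha_top ((tendsto_add_atTop_iff_nat 1).2 h))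

theorem exists_tendsto_sum_range_div_iff {x a : ℕ → ℝ} (ha_pos : ∀ n, 0 < a n)
    (ha_mono : Monotone a) (ha_top : Tendsto a atTop atTop) :
    (∃ l, Tendsto (fun m => ∑ n ∈ range m, x n / a n) atTop (𝓝 l)) ↔
      (Tendsto (fun n => (∑ i ∈ range (n + 1), x i) / a n) atTop (𝓝 0) ∧
        ∃ l, Tendsto (fun m => ∑ n ∈ range m, (1 / a n - 1 / a (n + 1)) *
          ∑ i ∈ range (n + 1), x i) atTop (𝓝 l)) := by
  have h_parts (m : ℕ) : ∑ n ∈ range m, x n / a n =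
      ∑ n ∈ range m, (1 / a n - 1 / a (n + 1)) * ∑ i ∈ range (n + 1), x i +
        (∑ i ∈ range m, x i) / a m := by
    rw [← one_div_mul_eq_div, ← sum_range_mul_by_parts]
    simp only [one_div_mul_eq_div]
  constructor
  · rintro ⟨l, h⟩
    have h_kronecker := tendsto_sum_range_div_of_tendsto_sum_range_div ha_pos ha_mono ha_top h
    have h_terms : Tendsto (fun n => x n / a n) atTop (𝓝 0) := by
      simpa [sum_range_succ] using ((tendsto_add_atTop_iff_nat 1).2 h).sub h
    exact ⟨by simpa [sum_range_succ, add_div] using h_kronecker.add h_terms,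
      l, by simpa [h_parts] using h.sub h_kronecker⟩
  · rintro ⟨h_succ, l, h⟩
    have h_kronecker : Tendsto (fun m => (∑ i ∈ range m, x i) / a m) atTop (𝓝 0) :=
      (tendsto_add_atTop_iff_nat 1).1 <|
        tendsto_div_nhds_zero_of_le ha_pos (fun n => ha_mono n.le_succ) h_succ
    exact ⟨l, by simpa [h_parts] using h.add h_kronecker⟩

/-- generalized Kronecker lemma.  Let `(x_n)_{n≥1}` be a real sequence and
`(a_n)_{n≥1}` a strictly increasing sequence of positive numbers tending to infinity.  Then
`∑_{n≥1} x_n / a_n` converges iff `(∑_{i=1}^n x_i)/a_n → 0` and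
`∑_{n≥1} (1/a_n − 1/a_{n+1}) ∑_{i=1}^n x_i` converges. -/
theorem stmt_3 (x a : ℕ → ℝ)
    (ha_pos : ∀ n, 1 ≤ n → 0 < a n)
    (ha_mono : ∀ m n, 1 ≤ m → m < n → a m < a n)
    (ha_top : Filter.Tendsto a Filter.atTop Filter.atTop) :
    (∃ l : ℝ, Filter.Tendsto (fun m => ∑ n ∈ Finset.Icc 1 m, x n / a n) Filter.atTop (nhds l)) ↔
      (Filter.Tendsto (fun n => (∑ i ∈ Finset.Icc 1 n, x i) / a n) Filter.atTop (nhds 0) ∧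
        ∃ l : ℝ, Filter.Tendsto
          (fun m => ∑ n ∈ Finset.Icc 1 m, (1 / a n - 1 / a (n + 1)) * ∑ i ∈ Finset.Icc 1 n, x i)
          Filter.atTop (nhds l)) := by
  have ha_pos' (n : ℕ) : 0 < a (n + 1) := ha_pos _ n.succ_pos
  have ha_mono' : Monotone fun n => a (n + 1) :=
    monotone_nat_of_le_succ fun n => (ha_mono _ _ n.succ_pos n.succ.lt_succ_self).le
  simp only [sum_Icc_one_eq_sum_range]
  rw [← tendsto_add_atTop_iff_nat 1 (f := fun n => (∑ k ∈ range n, x (k + 1)) / a n)]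
  exact exists_tendsto_sum_range_div_iff ha_pos' ha_mono' ((tendsto_add_atTop_iff_nat 1).2 ha_top)
end

section
/- Let T = (t_{nk})_{n,k≥0} be an infinite matrix with nonnegative entries such that for every n the row sum ∑_{k≥0} t_{nk} is finite. For a convergent real sequence (q_k) define its transform Q_n = ∑_{k≥0} t_{nk} q_k (which is well defined since convergent sequences are bounded). The summation method is regular — i.e., for every convergent sequence (q_k) with limit q one has Q_n → q as n → ∞ — if and only if (1) lim_{n→∞} ∑_{k≥0} t_{nk} = 1 and (2) for every fixed k, lim_{n→∞} t_{nk} = 0. -/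
/-!
Necessity: the constant sequence `1` is transformed into the row sums, and the indicator of
`{k}` into the `k`-th column. Sufficiency: subtracting the limit reduces to null sequences `p`.
Given `ε > 0`, only finitely many `|p k|` exceed `ε`; their contribution vanishes because the
columns do, and the remaining terms contribute at most `ε` times the (bounded) row sum.
-/

open Filter Topology

section
variable {β : Type*}

theorem summable_mul_of_abs_le {w p : β → ℝ} {M : ℝ} (hw0 : ∀ k, 0 ≤ w k) (hw : Summable w)
    (hp : ∀ k, |p k| ≤ M) : Summable fun k => w k * p k :=
  Summable.of_norm_bounded (hw.mul_right M) fun k => by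
    rw [Real.norm_eq_abs, abs_mul, abs_of_nonneg (hw0 k)]
    exact mul_le_mul_of_nonneg_left (hp k) (hw0 k)

theorem abs_tsum_mul_le_sum_add_mul_tsum {w p : β → ℝ} {ε : ℝ} (S : Finset β)
    (hw0 : ∀ k, 0 ≤ w k) (hw : Summable w) (hε : 0 ≤ ε) (hp : ∀ k ∉ S, |p k| ≤ ε) :
    |∑' k, w k * p k| ≤ ∑ k ∈ S, w k * |p k| + ε * ∑' k, w k := by
  classical
  have hS : Summable fun k => if k ∈ S then w k * |p k| else 0 :=
    summable_of_ne_finset_zero fun k hk => if_neg hk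
  have hle : ∀ k, |w k * p k| ≤ (if k ∈ S then w k * |p k| else 0) + ε * w k := fun k => by
    rw [abs_mul, abs_of_nonneg (hw0 k)]
    by_cases hk : k ∈ S
    · simpa [hk] using mul_nonneg hε (hw0 k)
    · simpa [hk, mul_comm ε] using mul_le_mul_of_nonneg_left (hp k hk) (hw0 k)
  have habs : Summable fun k => |w k * p k| :=
    (hS.add (hw.mul_left ε)).of_nonneg_of_le (fun k => abs_nonneg _) hle
  calc |∑' k, w k * p k| ≤ ∑' k, |w k * p k| := by
        rw [← Real.norm_eq_abs]; exact norm_tsum_le_tsum_norm habs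
    _ ≤ ∑' k, ((if k ∈ S then w k * |p k| else 0) + ε * w k) :=
        habs.tsum_le_tsum hle (hS.add (hw.mul_left ε))
    _ = ∑ k ∈ S, w k * |p k| + ε * ∑' k, w k := by
        rw [hS.tsum_add (hw.mul_left ε), tsum_mul_left, tsum_eq_sum fun k hk => if_neg hk,
          Finset.sum_ite_mem, Finset.inter_self]

variable {α : Type*} {l : Filter α} {t : α → β → ℝ}

theorem tendsto_tsum_mul_of_tendsto_zero {p : β → ℝ} {C : ℝ} (hnn : ∀ n k, 0 ≤ t n k)
    (hrow : ∀ n, Summable (t n)) (hbdd : ∀ᶠ n in l, ∑' k, t n k ≤ C)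
    (hcol : ∀ k, Tendsto (fun n => t n k) l (𝓝 0)) (hp : Tendsto p cofinite (𝓝 0)) :
    Tendsto (fun n => ∑' k, t n k * p k) l (𝓝 0) := by
  rw [Metric.tendsto_nhds]
  intro c hc
  obtain ⟨ε, hε, hεC⟩ := exists_pos_mul_lt (half_pos hc) C
  have hsmall : ∀ᶠ k in cofinite, |p k| ≤ ε := by
    simpa using hp.eventually (Metric.closedBall_mem_nhds 0 hε)
  have hfin : {k | ¬|p k| ≤ ε}.Finite := eventually_cofinite.mp hsmall
  have hhead : Tendsto (fun n => ∑ k ∈ hfin.toFinset, t n k * |p k|) l (𝓝 0) := by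
    simpa using tendsto_finsetSum _ fun k _ => (hcol k).mul_const |p k|
  filter_upwards [hbdd, hhead.eventually (gt_mem_nhds (half_pos hc))] with n hn hhead_n
  rw [Real.dist_0_eq_abs]
  calc |∑' k, t n k * p k| ≤ ∑ k ∈ hfin.toFinset, t n k * |p k| + ε * ∑' k, t n k :=
        abs_tsum_mul_le_sum_add_mul_tsum _ (hnn n) (hrow n) hε.le fun k hk => by simpa using hk
    _ < c / 2 + ε * C := add_lt_add_of_lt_of_le hhead_n (mul_le_mul_of_nonneg_left hn hε.le)
    _ < c := by linarith

theorem tendsto_tsum_mul_of_tendsto {q : β → ℝ} {L : ℝ} (hnn : ∀ n k, 0 ≤ t n k)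
    (hrow : ∀ n, Summable (t n)) (hsum : Tendsto (fun n => ∑' k, t n k) l (𝓝 1))
    (hcol : ∀ k, Tendsto (fun n => t n k) l (𝓝 0)) (hq : Tendsto q cofinite (𝓝 L)) :
    Tendsto (fun n => ∑' k, t n k * q k) l (𝓝 L) := by
  obtain ⟨M, hM⟩ := hq.abs.bddAbove_range_of_cofinite
  have hsplit : ∀ n, ∑' k, t n k * (q k - L) = ∑' k, t n k * q k - L * ∑' k, t n k := fun n => by
    simp_rw [mul_sub]
    rw [(summable_mul_of_abs_le (hnn n) (hrow n) fun k => hM ⟨k, rfl⟩).tsum_sub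
      ((hrow n).mul_right L), tsum_mul_right, mul_comm]
  have hnull := tendsto_tsum_mul_of_tendsto_zero hnn hrow
    (hsum.eventually (ge_mem_nhds one_lt_two)) hcol (by simpa using hq.sub_const L)
  simp_rw [hsplit] at hnull
  simpa using hnull.add (hsum.const_mul L)

theorem tsum_mul_pi_single [DecidableEq β] (w : β → ℝ) (k : β) :
    ∑' j, w j * (Pi.single k 1 : β → ℝ) j = w k := by
  simp [Pi.single_apply]

theorem tendsto_pi_single_cofinite [DecidableEq β] (k : β) :
    Tendsto (Pi.single k 1 : β → ℝ) cofinite (𝓝 0) :=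
  tendsto_const_nhds.congr' <| (Set.finite_singleton k).eventually_cofinite_notMem.mono
    fun j hj => by simp [Pi.single_eq_of_ne hj]

end

/-- Toeplitz.  Let `T = (t_{nk})` be an infinite matrix with nonnegative
entries and finite row sums.  The associated matrix summation method `Q_n = ∑_k t_{nk} q_k`
is regular (maps every convergent sequence to a sequence with the same limit) iff
`∑_k t_{nk} → 1` as `n → ∞` and, for every fixed `k`, `t_{nk} → 0` as `n → ∞`. -/
theorem stmt_4 (t : ℕ → ℕ → ℝ) (hnn : ∀ n k, 0 ≤ t n k) (hrow : ∀ n, Summable (t n)) :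
    (∀ (q : ℕ → ℝ) (L : ℝ), Filter.Tendsto q Filter.atTop (nhds L) →
        Filter.Tendsto (fun n => ∑' k, t n k * q k) Filter.atTop (nhds L)) ↔
      (Filter.Tendsto (fun n => ∑' k, t n k) Filter.atTop (nhds 1) ∧
        ∀ k, Filter.Tendsto (fun n => t n k) Filter.atTop (nhds 0)) := by
  constructor
  · intro h
    refine ⟨by simpa using h (fun _ => 1) 1 tendsto_const_nhds, fun k => ?_⟩
    have hk := h _ 0 (Nat.cofinite_eq_atTop ▸ tendsto_pi_single_cofinite k)
    simpa only [tsum_mul_pi_single] using hk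
  · rintro ⟨hsum, hcol⟩ q L hq
    exact tendsto_tsum_mul_of_tendsto hnn hrow hsum hcol (Nat.cofinite_eq_atTop ▸ hq)
end

section
/- Let (X_n)_{n≥1} be a sequence of random variables adapted to a filtration (G_n)_{n≥1} (i.e. X_n is G_n-measurable), and let C > 0 be a constant. Then for almost every ω belonging to the event on which simultaneously (a) ∑_{i≥2} P(|X_i| > C | G_{i−1}) < ∞, (b) the series ∑_{i≥2} E(X_i · 1_{|X_i| ≤ C} | G_{i−1}) converges, and (c) ∑_{i≥2} [ E(X_i² · 1_{|X_i| ≤ C} | G_{i−1}) − (E(X_i · 1_{|X_i| ≤ C} | G_{i−1}))² ] < ∞, the series ∑_{i≥1} X_i(ω) converges. -/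
/-!
Split `Y_i = E(Y_i | 𝒢_{i-1}) + (Y_i - E(Y_i | 𝒢_{i-1}))`. By Lévy's conditional Borel–Cantelli
lemma, (a) forces `X_i = Y_i` for all large `i`, and the conditional means are summable by (b).
The centred terms are square-integrable martingale differences whose conditional variances are
the terms of (c). Stopping their partial sums once the accumulated conditional variance exceeds
`K` gives an `L²`-bounded, hence almost surely convergent, martingale; on the event in (c) it
agrees with the unstopped one as soon as `K` bounds the total conditional variance.
-/

open Filter Finset MeasureTheory ProbabilityTheory
open scoped ENNReal Topology

section PartialSums

variable {E : Type*} [AddCommGroup E] [TopologicalSpace E] [IsTopologicalAddGroup E]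

lemma exists_tendsto_sum_range_of_eventuallyEq {f g : ℕ → E} (hfg : f =ᶠ[atTop] g)
    (hg : ∃ l, Tendsto (fun n => ∑ i ∈ range n, g i) atTop (𝓝 l)) :
    ∃ l, Tendsto (fun n => ∑ i ∈ range n, f i) atTop (𝓝 l) := by
  obtain ⟨N, hN⟩ := eventually_atTop.1 hfg
  obtain ⟨l, hl⟩ := hg
  refine ⟨l + (∑ i ∈ range N, f i - ∑ i ∈ range N, g i), (hl.add_const _).congr' ?_⟩
  filter_upwards [eventually_ge_atTop N] with n hn
  rw [← sum_range_add_sum_Ico f hn, ← sum_range_add_sum_Ico g hn,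
    sum_congr rfl fun i hi => hN i (mem_Ico.1 hi).1]
  abel

lemma exists_tendsto_sum_range_of_exists_tendsto_sum_range_succ {f : ℕ → E}
    (h : ∃ l, Tendsto (fun n => ∑ i ∈ range n, f (i + 1)) atTop (𝓝 l)) :
    ∃ l, Tendsto (fun n => ∑ i ∈ range n, f i) atTop (𝓝 l) := by
  obtain ⟨l, hl⟩ := h
  refine ⟨l + f 0, (tendsto_add_atTop_iff_nat 1).1 ?_⟩
  simpa only [sum_range_succ'] using hl.add_const (f 0)

end PartialSums

lemma sum_Icc_succ_add_eq_sum_range {M : Type*} [AddCommMonoid M] (f : ℕ → M) (a n : ℕ) :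
    ∑ i ∈ Icc (a + 1) (n + a), f i = ∑ k ∈ range n, f (k + a + 1) := by
  rw [← Ico_add_one_right_eq_Icc, sum_Ico_eq_sum_range, show n + a + 1 - (a + 1) = n by omega]
  exact sum_congr rfl fun k _ => congrArg f (by omega)

lemma summable_of_tsum_ofReal_lt_top {ι : Type*} {q : ι → ℝ} (hq : ∀ i, 0 ≤ q i)
    (h : ∑' i, ENNReal.ofReal (q i) < ∞) : Summable q :=
  (ENNReal.summable_toReal h.ne).congr fun i => ENNReal.toReal_ofReal (hq i)

lemma sum_range_ite_sum_range_le {v : ℕ → ℝ} (hv : ∀ k, 0 ≤ v k) {K : ℝ} (hK : 0 ≤ K) (n : ℕ) :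
    ∑ k ∈ range n, (if ∑ j ∈ range (k + 1), v j ≤ K then v k else 0) ≤ K := by
  induction n with
  | zero => simpa using hK
  | succ n ih =>
    rw [sum_range_succ]
    split_ifs with h
    · calc _ ≤ ∑ k ∈ range n, v k + v n := by
            gcongr with k
            split_ifs
            exacts [le_rfl, hv k]
        _ ≤ K := by rwa [← sum_range_succ]
    · simpa using ih

def MeasureTheory.Filtration.shift {Ω : Type*} {m0 : MeasurableSpace Ω}
    (ℱ : Filtration ℕ m0) : Filtration ℕ m0 where
  seq n := ℱ (n + 1)
  mono' _ _ h := ℱ.mono (Nat.add_le_add_right h 1)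
  le' n := ℱ.le (n + 1)

namespace MeasureTheory

variable {Ω : Type*} {m0 : MeasurableSpace Ω} {μ : Measure Ω} [IsFiniteMeasure μ]

lemma eLpNorm_one_le_of_integral_sq_le {f : Ω → ℝ} (hf : MemLp f 2 μ) {K : ℝ}
    (hK : ∫ ω, f ω ^ 2 ∂μ ≤ K) : eLpNorm f 1 μ ≤ ENNReal.ofReal (K + μ.real Set.univ) := by
  rw [eLpNorm_one_eq_lintegral_enorm,
    ← ofReal_integral_norm_eq_lintegral_enorm (hf.integrable one_le_two)]
  refine ENNReal.ofReal_le_ofReal ?_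
  calc ∫ ω, ‖f ω‖ ∂μ ≤ ∫ ω, (f ω ^ 2 + 1) ∂μ :=
        integral_mono (hf.integrable one_le_two).norm (hf.integrable_sq.add (integrable_const 1))
          fun ω => by
            rw [Real.norm_eq_abs]
            nlinarith [sq_nonneg (|f ω| - 1), sq_abs (f ω)]
    _ ≤ K + μ.real Set.univ := by
        rw [integral_add hf.integrable_sq (integrable_const 1)]
        simpa using hK

lemma integral_mul_eq_zero_of_condExp_eq_zero {m : MeasurableSpace Ω} (hm : m ≤ m0)
    {f g : Ω → ℝ} (hg : StronglyMeasurable[m] g) (hgf : Integrable (g * f) μ)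
    (hf : Integrable f μ) (hf0 : μ[f|m] =ᵐ[μ] 0) : ∫ ω, (g * f) ω ∂μ = 0 := by
  rw [← integral_condExp hm]
  refine integral_eq_zero_of_ae ?_
  filter_upwards [condExp_mul_of_stronglyMeasurable_left hg hgf hf, hf0] with ω h h0
  simp [h, h0]

variable {ℱ : Filtration ℕ m0} {Z : ℕ → Ω → ℝ}

lemma martingale_sum_range (hZm : ∀ k, StronglyMeasurable[ℱ (k + 1)] (Z k))
    (hZi : ∀ k, Integrable (Z k) μ) (hZ0 : ∀ k, μ[Z k|ℱ k] =ᵐ[μ] 0) :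
    Martingale (fun n => ∑ k ∈ range n, Z k) ℱ μ := by
  have hS : StronglyAdapted ℱ (fun n => ∑ k ∈ range n, Z k) := fun n =>
    Finset.stronglyMeasurable_sum _ fun k hk => (hZm k).mono (ℱ.mono (mem_range.1 hk))
  have hSi : ∀ n, Integrable (∑ k ∈ range n, Z k) μ := fun n =>
    integrable_finsetSum' _ fun k _ => hZi k
  refine martingale_nat hS hSi fun n => ?_
  filter_upwards [condExp_add (hSi n) (hZi n) (ℱ n), hZ0 n] with ω hadd h0
  rw [sum_range_succ, hadd, Pi.add_apply, h0,
    condExp_of_stronglyMeasurable (ℱ.le n) (hS n) (hSi n)]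
  simp

lemma integral_sq_sum_range (hZm : ∀ k, StronglyMeasurable[ℱ (k + 1)] (Z k))
    (hZ2 : ∀ k, MemLp (Z k) 2 μ) (hZ0 : ∀ k, μ[Z k|ℱ k] =ᵐ[μ] 0) (n : ℕ) :
    ∫ ω, (∑ k ∈ range n, Z k) ω ^ 2 ∂μ = ∑ k ∈ range n, ∫ ω, Z k ω ^ 2 ∂μ := by
  induction n with
  | zero => simp
  | succ n ih =>
    set S := ∑ k ∈ range n, Z k
    have hS2 : MemLp S 2 μ := memLp_finsetSum' _ fun k _ => hZ2 k
    have hSZ : Integrable (S * Z n) μ := hS2.integrable_mul (hZ2 n)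
    have hSm : StronglyMeasurable[ℱ n] S :=
      (martingale_sum_range hZm (fun k => (hZ2 k).integrable one_le_two) hZ0).stronglyMeasurable n
    have hcross : ∫ ω, (S * Z n) ω ∂μ = 0 :=
      integral_mul_eq_zero_of_condExp_eq_zero (ℱ.le n) hSm hSZ ((hZ2 n).integrable one_le_two)
        (hZ0 n)
    calc ∫ ω, (∑ k ∈ range (n + 1), Z k) ω ^ 2 ∂μ
        = ∫ ω, (S ω ^ 2 + 2 * (S * Z n) ω + Z n ω ^ 2) ∂μ := by
          congr 1 with ω
          rw [sum_range_succ, Pi.add_apply, Pi.mul_apply]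
          ring
      _ = ∫ ω, S ω ^ 2 ∂μ + 2 * ∫ ω, (S * Z n) ω ∂μ + ∫ ω, Z n ω ^ 2 ∂μ := by
          have hS2Z : Integrable (fun ω => S ω ^ 2 + 2 * (S * Z n) ω) μ :=
            hS2.integrable_sq.add (hSZ.const_mul 2)
          rw [integral_add hS2Z (hZ2 n).integrable_sq,
            integral_add hS2.integrable_sq (hSZ.const_mul 2), integral_const_mul]
      _ = ∑ k ∈ range (n + 1), ∫ ω, Z k ω ^ 2 ∂μ := by
          rw [ih, hcross, sum_range_succ]
          ring

lemma ae_exists_tendsto_sum_range_of_sum_integral_sq_le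
    (hZm : ∀ k, StronglyMeasurable[ℱ (k + 1)] (Z k)) (hZ2 : ∀ k, MemLp (Z k) 2 μ)
    (hZ0 : ∀ k, μ[Z k|ℱ k] =ᵐ[μ] 0) {K : ℝ} (hK : ∀ n, ∑ k ∈ range n, ∫ ω, Z k ω ^ 2 ∂μ ≤ K) :
    ∀ᵐ ω ∂μ, ∃ l, Tendsto (fun n => ∑ k ∈ range n, Z k ω) atTop (𝓝 l) := by
  have hmart := martingale_sum_range hZm (fun k => (hZ2 k).integrable one_le_two) hZ0
  have hbdd : ∀ n, eLpNorm (∑ k ∈ range n, Z k) 1 μ ≤ (K + μ.real Set.univ).toNNReal := fun n =>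
    eLpNorm_one_le_of_integral_sq_le (memLp_finsetSum' _ fun k _ => hZ2 k)
      ((integral_sq_sum_range hZm hZ2 hZ0 n).trans_le (hK n))
  filter_upwards [hmart.submartingale.ae_tendsto_limitProcess hbdd] with ω hω
  exact ⟨_, by simpa only [Finset.sum_apply] using hω⟩

lemma ae_exists_tendsto_sum_range_indicator
    (hZm : ∀ k, StronglyMeasurable[ℱ (k + 1)] (Z k)) (hZ2 : ∀ k, MemLp (Z k) 2 μ)
    (hZ0 : ∀ k, μ[Z k|ℱ k] =ᵐ[μ] 0) {A : ℕ → Set Ω} (hA : ∀ k, MeasurableSet[ℱ k] (A k))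
    {K : ℝ} (hK : ∀ n, ∑ k ∈ range n, ∫ ω in A k, μ[Z k ^ 2|ℱ k] ω ∂μ ≤ K) :
    ∀ᵐ ω ∂μ, ∃ l, Tendsto (fun n => ∑ k ∈ range n, (A k).indicator (Z k) ω) atTop (𝓝 l) := by
  refine ae_exists_tendsto_sum_range_of_sum_integral_sq_le
    (fun k => (hZm k).indicator (ℱ.mono k.le_succ _ (hA k)))
    (fun k => (hZ2 k).indicator (ℱ.le k _ (hA k))) (fun k => ?_) (K := K) fun n => ?_
  · filter_upwards [condExp_indicator ((hZ2 k).integrable one_le_two) (hA k), hZ0 k] with ω h h0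
    simp [h, h0]
  · refine le_of_eq_of_le (sum_congr rfl fun k _ => ?_) (hK n)
    rw [setIntegral_condExp (f := Z k ^ 2) (ℱ.le k) (hZ2 k).integrable_sq (hA k),
      ← integral_indicator (ℱ.le k _ (hA k))]
    congr 1 with ω
    by_cases hω : ω ∈ A k <;> simp [hω]

lemma ae_exists_tendsto_sum_range_of_tsum_condExp_sq_lt_top
    (hZm : ∀ k, StronglyMeasurable[ℱ (k + 1)] (Z k)) (hZ2 : ∀ k, MemLp (Z k) 2 μ)
    (hZ0 : ∀ k, μ[Z k|ℱ k] =ᵐ[μ] 0) :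
    ∀ᵐ ω ∂μ, ∑' k, ENNReal.ofReal (μ[Z k ^ 2|ℱ k] ω) < ∞ →
      ∃ l, Tendsto (fun n => ∑ k ∈ range n, Z k ω) atTop (𝓝 l) := by
  set v := fun k => μ[Z k ^ 2|ℱ k]
  have hv0 : ∀ᵐ ω ∂μ, ∀ k, 0 ≤ v k ω :=
    ae_all_iff.2 fun k => condExp_nonneg (ae_of_all _ fun ω => sq_nonneg (Z k ω))
  -- predictable stopping: `Z k` is kept while `v 0 + ⋯ + v k ≤ K`
  set A : ℕ → ℕ → Set Ω := fun K k => {ω | ∑ j ∈ range (k + 1), v j ω ≤ K}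
  have hA : ∀ K k, MeasurableSet[ℱ k] (A K k) := fun K k =>
    measurableSet_le (Finset.measurable_sum _ fun j hj =>
      (stronglyMeasurable_condExp.mono (ℱ.mono (Nat.lt_succ_iff.1 (mem_range.1 hj)))).measurable)
      measurable_const
  have hbound : ∀ K n, ∑ k ∈ range n, ∫ ω in A K k, v k ω ∂μ ≤ K * μ.real Set.univ := by
    intro K n
    have hint : ∀ k, Integrable ((A K k).indicator (v k)) μ := fun k =>
      integrable_condExp.indicator (ℱ.le k _ (hA K k))
    calc ∑ k ∈ range n, ∫ ω in A K k, v k ω ∂μ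
        = ∫ ω, ∑ k ∈ range n, (A K k).indicator (v k) ω ∂μ := by
          rw [integral_finsetSum _ fun k _ => hint k]
          exact sum_congr rfl fun k _ => (integral_indicator (ℱ.le k _ (hA K k))).symm
      _ ≤ ∫ _, (K : ℝ) ∂μ := by
          refine integral_mono_ae (integrable_finsetSum _ fun k _ => hint k)
            (integrable_const _) ?_
          filter_upwards [hv0] with ω hω
          simp only [Set.indicator_apply]
          exact sum_range_ite_sum_range_le hω K.cast_nonneg n
      _ = K * μ.real Set.univ := by simp [mul_comm]
  have htrunc := fun K : ℕ => ae_exists_tendsto_sum_range_indicator hZm hZ2 hZ0 (hA K) (hbound K)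
  filter_upwards [hv0, ae_all_iff.2 htrunc] with ω hv0ω htruncω hfin
  have hsum := summable_of_tsum_ofReal_lt_top hv0ω hfin
  obtain ⟨K, hK⟩ := exists_nat_ge (∑' k, v k ω)
  obtain ⟨l, hl⟩ := htruncω K
  refine ⟨l, hl.congr fun n => sum_congr rfl fun k _ => Set.indicator_of_mem ?_ _⟩
  exact (hsum.sum_le_tsum _ fun j _ => hv0ω j).trans hK

lemma ae_exists_tendsto_sum_range_sub_condExp {Y : ℕ → Ω → ℝ}
    (hYm : ∀ k, StronglyMeasurable[ℱ (k + 1)] (Y k)) (hY2 : ∀ k, MemLp (Y k) 2 μ) :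
    ∀ᵐ ω ∂μ, ∑' k, ENNReal.ofReal (Var[Y k; μ | ℱ k] ω) < ∞ →
      ∃ l, Tendsto (fun n => ∑ k ∈ range n, (Y k ω - μ[Y k|ℱ k] ω)) atTop (𝓝 l) :=
  ae_exists_tendsto_sum_range_of_tsum_condExp_sq_lt_top (Z := fun k => Y k - μ[Y k|ℱ k])
    (fun k => (hYm k).sub (stronglyMeasurable_condExp.mono (ℱ.mono k.le_succ)))
    (fun k => (hY2 k).sub ((hY2 k).condExp one_le_two)) fun k => by
      filter_upwards [condExp_sub ((hY2 k).integrable one_le_two) integrable_condExp (ℱ k)]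
        with ω h
      rw [h, Pi.sub_apply,
        condExp_of_stronglyMeasurable (ℱ.le k) stronglyMeasurable_condExp integrable_condExp,
        sub_self, Pi.zero_apply]

lemma ae_eventually_notMem_of_tsum_condExp_indicator_lt_top {s : ℕ → Set Ω}
    (hs : ∀ n, MeasurableSet[ℱ n] (s n)) :
    ∀ᵐ ω ∂μ, ∑' k, ENNReal.ofReal (μ[(s (k + 1)).indicator 1|ℱ k] ω) < ∞ →
      ∀ᶠ n in atTop, ω ∉ s n := by
  have hnonneg : ∀ᵐ ω ∂μ, ∀ k, 0 ≤ μ[(s (k + 1)).indicator (1 : Ω → ℝ)|ℱ k] ω :=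
    ae_all_iff.2 fun k => condExp_nonneg
      (ae_of_all _ fun ω => Set.indicator_nonneg (fun _ _ => zero_le_one) ω)
  filter_upwards [ae_mem_limsup_atTop_iff μ hs, hnonneg] with ω hlimsup h0 hfin
  have hsum := summable_of_tsum_ofReal_lt_top h0 hfin
  have : ω ∉ limsup s atTop := fun hω =>
    not_tendsto_atTop_of_tendsto_nhds hsum.hasSum.tendsto_sum_nat (hlimsup.1 hω)
  simpa [mem_limsup_iff_frequently_mem, Filter.Frequently] using this

lemma StronglyMeasurable.ite_abs_le {m : MeasurableSpace Ω} {f : Ω → ℝ}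
    (hf : StronglyMeasurable[m] f) (C : ℝ) :
    StronglyMeasurable[m] fun ω => if |f ω| ≤ C then f ω else 0 :=
  hf.ite (hf.norm.measurableSet_le stronglyMeasurable_const) stronglyMeasurable_const

lemma memLp_ite_abs_le {f : Ω → ℝ} (hf : StronglyMeasurable f) (C : ℝ) (p : ℝ≥0∞) :
    MemLp (fun ω => if |f ω| ≤ C then f ω else 0) p μ :=
  MemLp.of_bound (hf.ite_abs_le C).aestronglyMeasurable |C| (ae_of_all _ fun ω => by
    rw [Real.norm_eq_abs]
    split_ifs with h
    exacts [h.trans (le_abs_self C), by simp])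

end MeasureTheory

theorem stmt_7_general {Ω : Type*} {m0 : MeasurableSpace Ω} (μ : Measure Ω) [IsProbabilityMeasure μ]
    (𝒢 : Filtration ℕ m0) (X : ℕ → Ω → ℝ)
    (hadapt : ∀ i, StronglyMeasurable[𝒢 i] (X i))
    (C : ℝ)
    (Y : ℕ → Ω → ℝ) (hY : ∀ i ω, Y i ω = if |X i ω| ≤ C then X i ω else 0) :
    ∀ᵐ ω ∂μ,
      ((∑' i : ℕ,
          ENNReal.ofReal
            ((μ[Set.indicator {ω' | C < |X (i + 2) ω'|} (fun _ => (1 : ℝ))|𝒢 (i + 1)]) ω) < ⊤) ∧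
        (∃ l : ℝ, Filter.Tendsto (fun n => ∑ i ∈ Finset.Icc 2 n, (μ[Y i|𝒢 (i - 1)]) ω)
            Filter.atTop (nhds l)) ∧
        (∑' i : ℕ,
          ENNReal.ofReal
            ((μ[fun ω' => (Y (i + 2) ω') ^ 2|𝒢 (i + 1)]) ω - ((μ[Y (i + 2)|𝒢 (i + 1)]) ω) ^ 2)
            < ⊤)) →
        ∃ l : ℝ, Filter.Tendsto (fun n => ∑ i ∈ Finset.Icc 1 n, X i ω) Filter.atTop (nhds l) := by
  have hYeq : ∀ i, Y i = fun ω => if |X i ω| ≤ C then X i ω else 0 := fun i => funext (hY i)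
  have hYm : ∀ i, StronglyMeasurable[𝒢 i] (Y i) := fun i => hYeq i ▸ (hadapt i).ite_abs_le C
  have hY2 : ∀ i, MemLp (Y i) 2 μ := fun i =>
    hYeq i ▸ memLp_ite_abs_le ((hadapt i).mono (𝒢.le i)) C 2
  have hvar := ae_exists_tendsto_sum_range_sub_condExp (μ := μ) (ℱ := 𝒢.shift)
    (fun k => hYm (k + 2)) (fun k => hY2 (k + 2))
  have hvar_eq : ∀ᵐ ω ∂μ, ∀ k, Var[Y (k + 2); μ | 𝒢.shift k] ω =
      μ[Y (k + 2) ^ 2|𝒢.shift k] ω - μ[Y (k + 2)|𝒢.shift k] ω ^ 2 :=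
    ae_all_iff.2 fun k => condVar_ae_eq_condExp_sq_sub_sq_condExp (𝒢.le _) (hY2 (k + 2))
  have hbc := ae_eventually_notMem_of_tsum_condExp_indicator_lt_top (μ := μ) (ℱ := 𝒢.shift)
    (s := fun n => {ω | C < |X (n + 1) ω|})
    fun n => stronglyMeasurable_const.measurableSet_lt (hadapt (n + 1)).norm
  filter_upwards [hvar, hvar_eq, hbc] with ω hvarω hvar_eqω hbcω
  rintro ⟨htail, ⟨l, hl⟩, hvarsum⟩
  have hXY : (fun k => X (k + 2) ω) =ᶠ[atTop] fun k => Y (k + 2) ω := by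
    filter_upwards [(tendsto_add_atTop_nat 1).eventually (hbcω htail)] with k hk
    rw [hY, if_pos (not_lt.1 hk)]
  have hcond : Tendsto (fun n => ∑ k ∈ range n, μ[Y (k + 2)|𝒢.shift k] ω) atTop (𝓝 l) :=
    ((tendsto_add_atTop_iff_nat 1).2 hl).congr fun n => sum_Icc_succ_add_eq_sum_range _ 1 n
  obtain ⟨l', hl'⟩ :=
    hvarω (lt_of_eq_of_lt (tsum_congr fun k => by rw [hvar_eqω k]; rfl) hvarsum)
  have hYsum : ∃ l, Tendsto (fun n => ∑ k ∈ range n, Y (k + 2) ω) atTop (𝓝 l) :=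
    ⟨l' + l, (hl'.add hcond).congr fun n => by rw [← sum_add_distrib]; simp⟩
  obtain ⟨l'', hl''⟩ := exists_tendsto_sum_range_of_exists_tendsto_sum_range_succ
    (f := fun i => X (i + 1) ω)
    (exists_tendsto_sum_range_of_eventuallyEq hXY hYsum)
  exact ⟨l'', hl''.congr fun n => by
    simpa using (sum_Icc_succ_add_eq_sum_range (X · ω) 0 n).symm⟩

/-- conditional three-series theorem on events.  Let `(X_n)` be adapted to a
filtration `(𝒢_n)` and `C > 0`.  Writing `Y_i = X_i · 1_{|X_i| ≤ C}`, almost surely, on the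
event where simultaneously `∑_{i≥2} P(|X_i| > C | 𝒢_{i−1}) < ∞`, the series
`∑_{i≥2} E(Y_i | 𝒢_{i−1})` converges, and
`∑_{i≥2} [E(Y_i² | 𝒢_{i−1}) − (E(Y_i | 𝒢_{i−1}))²] < ∞`, the series `∑_{i≥1} X_i` converges. -/
theorem stmt_7 {Ω : Type*} {m0 : MeasurableSpace Ω} (μ : Measure Ω) [IsProbabilityMeasure μ]
    (𝒢 : Filtration ℕ m0) (X : ℕ → Ω → ℝ)
    (hadapt : ∀ i, StronglyMeasurable[𝒢 i] (X i))
    (C : ℝ) (hC : 0 < C)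
    (Y : ℕ → Ω → ℝ) (hY : ∀ i ω, Y i ω = if |X i ω| ≤ C then X i ω else 0) :
    ∀ᵐ ω ∂μ,
      ((∑' i : ℕ,
          ENNReal.ofReal
            ((μ[Set.indicator {ω' | C < |X (i + 2) ω'|} (fun _ => (1 : ℝ))|𝒢 (i + 1)]) ω) < ⊤) ∧
        (∃ l : ℝ, Filter.Tendsto (fun n => ∑ i ∈ Finset.Icc 2 n, (μ[Y i|𝒢 (i - 1)]) ω)
            Filter.atTop (nhds l)) ∧
        (∑' i : ℕ,
          ENNReal.ofReal
            ((μ[fun ω' => (Y (i + 2) ω') ^ 2|𝒢 (i + 1)]) ω - ((μ[Y (i + 2)|𝒢 (i + 1)]) ω) ^ 2)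
            < ⊤)) →
        ∃ l : ℝ, Filter.Tendsto (fun n => ∑ i ∈ Finset.Icc 1 n, X i ω) Filter.atTop (nhds l) :=
  stmt_7_general μ 𝒢 X hadapt C Y hY
end

section
/- There exists an absolute constant C > 0 with the following property: for every finite measure μ on a measurable space, every n ≥ 2, and every finite family θ_1, …, θ_n of square-integrable real functions that are pairwise orthogonal in L²(μ) (∫ θ_i θ_j dμ = 0 for i ≠ j), the partial sums S_i = ∑_{j=1}^i θ_j satisfy ∫ max_{1≤i≤n} S_i² dμ ≤ C (log n)² ∑_{i=1}^n ∫ θ_i² dμ. -/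
/-!
Split `(0, i]` along the binary expansion of `i`: the bit `k` of `i` contributes either nothing
or one dyadic block `(2^k m, 2^k (m+1)] ⊆ (0, n]`. Cauchy–Schwarz over the `K ≈ log₂ n` levels
bounds `S_i²`, uniformly in `i`, by `K` times the sum of the squares of all dyadic block sums.
The blocks of one level are disjoint, so by orthogonality each level integrates to at most
`∑ ∫ θ_j²`, and the `K` levels give `K² ∑ ∫ θ_j²`.
-/

open Finset MeasureTheory
open scoped ENNReal

def dyadicBlock (k m : ℕ) : Finset ℕ := Ioc (2 ^ k * m) (2 ^ k * (m + 1))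

theorem sum_range_sum_dyadicBlock {M : Type*} [AddCommMonoid M] (f : ℕ → M) (k N : ℕ) :
    ∑ m ∈ range N, ∑ j ∈ dyadicBlock k m, f j = ∑ j ∈ Ioc 0 (2 ^ k * N), f j := by
  induction N with
  | zero => simp
  | succ N ih =>
    rw [sum_range_succ, ih, dyadicBlock, sum_Ioc_consecutive _ (Nat.zero_le _)
      (Nat.mul_le_mul_left _ N.le_succ)]

theorem sum_Icc_one_eq_sum_binaryDigitBlocks {M : Type*} [AddCommMonoid M] (f : ℕ → M) {i K : ℕ}
    (hi : i < 2 ^ K) :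
    ∑ j ∈ Icc 1 i, f j =
      ∑ k ∈ range K, ∑ j ∈ Ioc (2 ^ (k + 1) * (i / 2 ^ (k + 1))) (2 ^ k * (i / 2 ^ k)), f j := by
  suffices h : ∀ K, ∑ k ∈ range K,
      ∑ j ∈ Ioc (2 ^ (k + 1) * (i / 2 ^ (k + 1))) (2 ^ k * (i / 2 ^ k)), f j
        = ∑ j ∈ Ioc (2 ^ K * (i / 2 ^ K)) i, f j by
    rw [h, Nat.div_eq_of_lt hi, mul_zero, ← Icc_add_one_left_eq_Ioc, zero_add]
  intro K
  induction K with
  | zero => simp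
  | succ K ih =>
    have hdigit : 2 ^ (K + 1) * (i / 2 ^ (K + 1)) ≤ 2 ^ K * (i / 2 ^ K) := by
      rw [pow_succ, ← Nat.div_div_eq_div_mul, mul_assoc]
      exact Nat.mul_le_mul_left _ (Nat.mul_div_le _ _)
    rw [sum_range_succ, ih, add_comm, sum_Ioc_consecutive _ hdigit (Nat.mul_div_le i _)]

theorem binaryDigitBlock_eq_empty_or_dyadicBlock (i k : ℕ) :
    Ioc (2 ^ (k + 1) * (i / 2 ^ (k + 1))) (2 ^ k * (i / 2 ^ k)) = ∅ ∨
      ∃ m < i / 2 ^ k,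
        Ioc (2 ^ (k + 1) * (i / 2 ^ (k + 1))) (2 ^ k * (i / 2 ^ k)) = dyadicBlock k m := by
  have hhalf : i / 2 ^ (k + 1) = i / 2 ^ k / 2 := by rw [pow_succ, Nat.div_div_eq_div_mul]
  rw [hhalf, pow_succ, mul_assoc]
  rcases Nat.even_or_odd' (i / 2 ^ k) with ⟨q, hq | hq⟩
  · left
    rw [hq, Nat.mul_div_cancel_left _ two_pos, Ioc_self]
  · right
    refine ⟨2 * q, by omega, ?_⟩
    rw [hq, dyadicBlock]
    congr 2; omega

def dyadicSquareSum (K n : ℕ) (a : ℕ → ℝ) : ℝ :=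
  ∑ k ∈ range K, ∑ m ∈ range (n / 2 ^ k), (∑ j ∈ dyadicBlock k m, a j) ^ 2

theorem dyadicSquareSum_nonneg (K n : ℕ) (a : ℕ → ℝ) : 0 ≤ dyadicSquareSum K n a := by
  unfold dyadicSquareSum; positivity

theorem sq_sum_Icc_one_le_dyadicSquareSum (a : ℕ → ℝ) {i n K : ℕ} (hin : i ≤ n)
    (hn : n < 2 ^ K) : (∑ j ∈ Icc 1 i, a j) ^ 2 ≤ K * dyadicSquareSum K n a := by
  rw [sum_Icc_one_eq_sum_binaryDigitBlocks a (hin.trans_lt hn)]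
  refine sq_sum_le_card_mul_sum_sq.trans ?_
  rw [card_range, dyadicSquareSum]
  gcongr with k
  rcases binaryDigitBlock_eq_empty_or_dyadicBlock i k with h | ⟨m, hm, h⟩
  · rw [h, sum_empty, sq, zero_mul]
    positivity
  · rw [h]
    exact single_le_sum (f := fun m => (∑ j ∈ dyadicBlock k m, a j) ^ 2) (fun _ _ => sq_nonneg _)
      (mem_range.2 (hm.trans_le (Nat.div_le_div_right hin)))

theorem dyadicBlock_subset_Icc {k m n : ℕ} (hm : m < n / 2 ^ k) : dyadicBlock k m ⊆ Icc 1 n := by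
  intro j hj
  rw [dyadicBlock, mem_Ioc] at hj
  have hend : 2 ^ k * (m + 1) ≤ n := by
    rw [mul_comm]
    exact (Nat.le_div_iff_mul_le (by positivity)).1 hm
  exact mem_Icc.2 ⟨by omega, hj.2.trans hend⟩

theorem natLog_two_add_one_le_three_mul_log {n : ℕ} (hn : 2 ≤ n) :
    (Nat.log 2 n + 1 : ℝ) ≤ 3 * Real.log n := by
  have hL : 1 ≤ Nat.log 2 n := Nat.le_log_of_pow_le one_lt_two (by simpa using hn)
  have hpow : (Nat.log 2 n : ℝ) * Real.log 2 ≤ Real.log n := by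
    rw [← Real.log_pow]
    exact Real.log_le_log (by positivity) (by exact_mod_cast Nat.pow_log_le_self 2 (by omega))
  have hL' : (1 : ℝ) ≤ Nat.log 2 n := by exact_mod_cast hL
  nlinarith [Real.log_two_gt_d9]

section Orthogonal

variable {α : Type*} [MeasurableSpace α] {μ : Measure α}

theorem integral_sq_sum_of_orthogonal {ι : Type*} {s : Finset ι} {θ : ι → α → ℝ}
    (hθ : ∀ j ∈ s, MemLp (θ j) 2 μ)
    (horth : ∀ j ∈ s, ∀ j' ∈ s, j ≠ j' → ∫ x, θ j x * θ j' x ∂μ = 0) :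
    ∫ x, (∑ j ∈ s, θ j x) ^ 2 ∂μ = ∑ j ∈ s, ∫ x, θ j x ^ 2 ∂μ := by
  have hint : ∀ j ∈ s, ∀ j' ∈ s, Integrable (fun x => θ j x * θ j' x) μ :=
    fun j hj j' hj' => (hθ j hj).integrable_mul (hθ j' hj')
  simp_rw [sq, sum_mul_sum]
  rw [integral_finsetSum _ fun j hj => integrable_finsetSum _ (hint j hj)]
  refine sum_congr rfl fun j hj => ?_
  rw [integral_finsetSum _ (hint j hj)]
  exact sum_eq_single_of_mem j hj fun j' hj' hne => horth j hj j' hj' hne.symm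

theorem integrable_sq_sum_dyadicBlock {k m n : ℕ} (hm : m < n / 2 ^ k) {θ : ℕ → α → ℝ}
    (hθ : ∀ j ∈ Icc 1 n, MemLp (θ j) 2 μ) :
    Integrable (fun x => (∑ j ∈ dyadicBlock k m, θ j x) ^ 2) μ :=
  (memLp_finsetSum _ fun j hj => hθ j (dyadicBlock_subset_Icc hm hj)).integrable_sq

theorem integrable_dyadicSquareSum (K n : ℕ) {θ : ℕ → α → ℝ}
    (hθ : ∀ j ∈ Icc 1 n, MemLp (θ j) 2 μ) :
    Integrable (fun x => dyadicSquareSum K n (θ · x)) μ :=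
  integrable_finsetSum _ fun _ _ => integrable_finsetSum _ fun _ hm =>
    integrable_sq_sum_dyadicBlock (mem_range.1 hm) hθ

theorem integral_dyadicSquareSum_le (K n : ℕ) {θ : ℕ → α → ℝ}
    (hθ : ∀ j ∈ Icc 1 n, MemLp (θ j) 2 μ)
    (horth : ∀ j ∈ Icc 1 n, ∀ j' ∈ Icc 1 n, j ≠ j' → ∫ x, θ j x * θ j' x ∂μ = 0) :
    ∫ x, dyadicSquareSum K n (θ · x) ∂μ ≤ K * ∑ j ∈ Icc 1 n, ∫ x, θ j x ^ 2 ∂μ := by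
  have hlevel : ∀ k, ∑ m ∈ range (n / 2 ^ k), ∫ x, (∑ j ∈ dyadicBlock k m, θ j x) ^ 2 ∂μ ≤
      ∑ j ∈ Icc 1 n, ∫ x, θ j x ^ 2 ∂μ := fun k => calc
    _ = ∑ m ∈ range (n / 2 ^ k), ∑ j ∈ dyadicBlock k m, ∫ x, θ j x ^ 2 ∂μ := by
      refine sum_congr rfl fun m hm => ?_
      have hsub := dyadicBlock_subset_Icc (mem_range.1 hm)
      exact integral_sq_sum_of_orthogonal (fun j hj => hθ j (hsub hj))
        fun j hj j' hj' => horth j (hsub hj) j' (hsub hj')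
    _ = ∑ j ∈ Ioc 0 (2 ^ k * (n / 2 ^ k)), ∫ x, θ j x ^ 2 ∂μ := sum_range_sum_dyadicBlock _ k _
    _ ≤ ∑ j ∈ Icc 1 n, ∫ x, θ j x ^ 2 ∂μ := by
      refine sum_le_sum_of_subset_of_nonneg (fun j hj => ?_)
        fun _ _ _ => integral_nonneg fun _ => sq_nonneg _
      rw [mem_Ioc] at hj
      exact mem_Icc.2 ⟨hj.1, hj.2.trans (Nat.mul_div_le n _)⟩
  calc ∫ x, dyadicSquareSum K n (θ · x) ∂μ
      = ∑ k ∈ range K, ∑ m ∈ range (n / 2 ^ k), ∫ x, (∑ j ∈ dyadicBlock k m, θ j x) ^ 2 ∂μ := by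
        simp only [dyadicSquareSum]
        rw [integral_finsetSum _ fun _ _ => integrable_finsetSum _ fun _ hm =>
          integrable_sq_sum_dyadicBlock (mem_range.1 hm) hθ]
        exact sum_congr rfl fun k _ => integral_finsetSum _ fun _ hm =>
          integrable_sq_sum_dyadicBlock (mem_range.1 hm) hθ
    _ ≤ ∑ _k ∈ range K, ∑ j ∈ Icc 1 n, ∫ x, θ j x ^ 2 ∂μ := sum_le_sum fun k _ => hlevel k
    _ = K * ∑ j ∈ Icc 1 n, ∫ x, θ j x ^ 2 ∂μ := by rw [sum_const, card_range, nsmul_eq_mul]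

end Orthogonal

/-- Rademacher–Menchoff maximal inequality.  There is an absolute constant
`C > 0` such that for every finite measure `μ`, every `n ≥ 2`, and every family
`θ_1, …, θ_n` of square-integrable, pairwise orthogonal functions, the partial sums
`S_i = ∑_{j=1}^i θ_j` satisfy
`∫ max_{1≤i≤n} S_i² dμ ≤ C (log n)² ∑_{i=1}^n ∫ θ_i² dμ`. -/
theorem stmt_8 :
    ∃ C : ℝ, 0 < C ∧
      ∀ (α : Type) [MeasurableSpace α] (μ : Measure α) [IsFiniteMeasure μ]
        (n : ℕ), 2 ≤ n → ∀ θ : ℕ → α → ℝ,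
        (∀ i ∈ Finset.Icc 1 n, MemLp (θ i) 2 μ) →
        (∀ i ∈ Finset.Icc 1 n, ∀ j ∈ Finset.Icc 1 n, i ≠ j →
          ∫ x, θ i x * θ j x ∂μ = 0) →
        ∫⁻ x, ENNReal.ofReal (⨆ i ∈ Finset.Icc 1 n, (∑ j ∈ Finset.Icc 1 i, θ j x) ^ 2) ∂μ ≤
          ENNReal.ofReal
            (C * Real.log n ^ 2 * ∑ i ∈ Finset.Icc 1 n, ∫ x, (θ i x) ^ 2 ∂μ) := by
  refine ⟨9, by norm_num, fun α _ μ _ n hn θ hθ horth => ?_⟩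
  set K := Nat.log 2 n + 1
  set G : α → ℝ := fun x => K * dyadicSquareSum K n (θ · x)
  have hG : ∀ x, 0 ≤ G x := fun x => mul_nonneg K.cast_nonneg (dyadicSquareSum_nonneg _ _ _)
  have hmax : ∀ x, ⨆ i ∈ Icc 1 n, (∑ j ∈ Icc 1 i, θ j x) ^ 2 ≤ G x := fun x =>
    Real.iSup_le (fun i => Real.iSup_le (fun hi => sq_sum_Icc_one_le_dyadicSquareSum _
      (mem_Icc.1 hi).2 (Nat.lt_pow_succ_log_self one_lt_two n)) (hG x)) (hG x)
  calc _ ≤ ∫⁻ x, ENNReal.ofReal (G x) ∂μ :=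
        lintegral_mono fun x => ENNReal.ofReal_le_ofReal (hmax x)
    _ = ENNReal.ofReal (∫ x, G x ∂μ) := (ofReal_integral_eq_lintegral_ofReal
        ((integrable_dyadicSquareSum K n hθ).const_mul _) (ae_of_all _ hG)).symm
    _ ≤ _ := by
      refine ENNReal.ofReal_le_ofReal ?_
      calc ∫ x, G x ∂μ ≤ K * (K * ∑ i ∈ Icc 1 n, ∫ x, θ i x ^ 2 ∂μ) := by
            rw [integral_const_mul]
            gcongr
            exact integral_dyadicSquareSum_le K n hθ horth
        _ ≤ (3 * Real.log n) ^ 2 * ∑ i ∈ Icc 1 n, ∫ x, θ i x ^ 2 ∂μ := by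
            rw [← mul_assoc, ← sq]
            gcongr
            exact_mod_cast natLog_two_add_one_le_three_mul_log hn
        _ = _ := by ring
end

section
/- Let μ be a finite measure on a measurable space and let (φ_i)_{i≥1} be an orthonormal system in L²(μ), i.e. ∫ φ_i φ_j dμ = 0 for i ≠ j and ∫ φ_i² dμ = 1 for all i. If the real coefficients (c_i)_{i≥1} satisfy ∑_{i≥2} c_i² (log i)² < ∞, then the series ∑_{i≥1} c_i φ_i(x) converges (its partial sums converge) for μ-almost every x. -/
/-!
Let `S n = ∑_{i ≤ n} c i φ i`. Chaining through the dyadic subintervals of `[a, a + 2^k]`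
gives the pointwise maximal inequality `max_{a ≤ n ≤ a + 2^k} (S n - S a)² ≤ (k + 1) Q`,
where `Q` is the sum of the squared increments of `S` over all those subintervals; by
orthogonality each of the `k + 1` levels of `Q` has mean `∑_{a < i ≤ a + 2^k} c i²`.
On the block `[2^K, 2^(K+1)]` the weight `(K + 1)²` is dominated by `(log i)²`, so both
`∑_K (K + 1) Q_K` and `∑_K (K + 1)² (S 2^(K+1) - S 2^K)²` have finite mean and are finite
almost everywhere. The second makes `S 2^K` converge, the first makes the oscillation of `S`
on the `K`-th block tend to zero.
-/

open Filter Finset MeasureTheory Topology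

namespace RademacherMenchoff

def dyadicSqSum (s : ℕ → ℝ) (a k : ℕ) : ℝ :=
  ∑ j ∈ range (k + 1), ∑ m ∈ range (2 ^ (k - j)),
    (s (a + (m + 1) * 2 ^ j) - s (a + m * 2 ^ j)) ^ 2

section Deterministic

variable (s : ℕ → ℝ)

lemma dyadicSqSum_nonneg (a k : ℕ) : 0 ≤ dyadicSqSum s a k :=
  sum_nonneg fun _ _ => sum_nonneg fun _ _ => sq_nonneg _

lemma dyadicSqSum_zero (a : ℕ) : dyadicSqSum s a 0 = (s (a + 1) - s a) ^ 2 := by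
  simp [dyadicSqSum]

lemma sq_sub_le_dyadicSqSum (a k : ℕ) : (s (a + 2 ^ k) - s a) ^ 2 ≤ dyadicSqSum s a k := by
  unfold dyadicSqSum
  refine le_trans (le_of_eq ?_) (single_le_sum (fun j _ => sum_nonneg fun m _ => sq_nonneg
    (s (a + (m + 1) * 2 ^ j) - s (a + m * 2 ^ j))) (self_mem_range_succ k))
  simp

lemma dyadicSqSum_succ (a k : ℕ) :
    dyadicSqSum s a (k + 1) =
      (s (a + 2 ^ (k + 1)) - s a) ^ 2 + dyadicSqSum s a k + dyadicSqSum s (a + 2 ^ k) k := by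
  have hsplit : ∀ j ∈ range (k + 1),
      ∑ m ∈ range (2 ^ (k + 1 - j)), (s (a + (m + 1) * 2 ^ j) - s (a + m * 2 ^ j)) ^ 2 =
        ∑ m ∈ range (2 ^ (k - j)), (s (a + (m + 1) * 2 ^ j) - s (a + m * 2 ^ j)) ^ 2 +
        ∑ m ∈ range (2 ^ (k - j)),
          (s (a + 2 ^ k + (m + 1) * 2 ^ j) - s (a + 2 ^ k + m * 2 ^ j)) ^ 2 := by
    intro j hj
    have hjk : j ≤ k := Nat.lt_succ_iff.mp (mem_range.mp hj)
    have hpow : 2 ^ (k - j) * 2 ^ j = 2 ^ k := by rw [← pow_add, Nat.sub_add_cancel hjk]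
    rw [show k + 1 - j = k - j + 1 by omega, pow_succ, mul_two, sum_range_add]
    congr 1
    refine sum_congr rfl fun m _ => ?_
    rw [← hpow]
    ring_nf
  unfold dyadicSqSum
  rw [sum_range_succ, sum_congr rfl hsplit, sum_add_distrib]
  simp only [Nat.sub_self, pow_zero, range_one, sum_singleton, zero_add, one_mul, zero_mul,
    add_zero]
  ring

theorem sq_sub_le_mul_dyadicSqSum (k : ℕ) :
    ∀ a n, a ≤ n → n ≤ a + 2 ^ k → (s n - s a) ^ 2 ≤ (k + 1) * dyadicSqSum s a k := by
  induction k with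
  | zero =>
    intro a n han hna
    rcases (show n = a ∨ n = a + 1 by omega) with rfl | rfl
    · simpa using dyadicSqSum_nonneg s n 0
    · simp [dyadicSqSum_zero]
  | succ k ih =>
    intro a n han hna
    have hQl := dyadicSqSum_nonneg s a k
    have hQr := dyadicSqSum_nonneg s (a + 2 ^ k) k
    have hk : (0 : ℝ) ≤ k := k.cast_nonneg
    -- Split at the midpoint `a + 2 ^ k`: Cauchy–Schwarz with weights `k + 1` and `1` costs
    -- only one extra level.
    have hhalves :
        (s n - s a) ^ 2 ≤ (k + 2) * (dyadicSqSum s a k + dyadicSqSum s (a + 2 ^ k) k) := by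
      by_cases hn : n ≤ a + 2 ^ k
      · nlinarith [ih a n han hn]
      · have hu := sq_sub_le_dyadicSqSum s a k
        have hv := ih (a + 2 ^ k) n (by omega) (by rw [pow_succ] at hna; omega)
        have hcs : ((k : ℝ) + 1) * (s n - s a) ^ 2 ≤
            (k + 1) * (k + 2) * (s (a + 2 ^ k) - s a) ^ 2
              + (k + 2) * (s n - s (a + 2 ^ k)) ^ 2 := by
          nlinarith [sq_nonneg ((k + 1) * (s (a + 2 ^ k) - s a) - (s n - s (a + 2 ^ k)))]
        refine le_of_mul_le_mul_left (hcs.trans ?_) (by positivity : (0 : ℝ) < k + 1)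
        nlinarith [mul_le_mul_of_nonneg_left hu (by positivity : (0 : ℝ) ≤ (k + 1) * (k + 2)),
          mul_le_mul_of_nonneg_left hv (by positivity : (0 : ℝ) ≤ k + 2)]
    rw [dyadicSqSum_succ]
    push_cast
    nlinarith [sq_nonneg (s (a + 2 ^ (k + 1)) - s a)]

lemma tendsto_nat_log_two_atTop : Tendsto (Nat.log 2) atTop atTop :=
  Nat.log_monotone.tendsto_atTop_atTop fun K => ⟨2 ^ K, by rw [Nat.log_pow one_lt_two]⟩

theorem exists_tendsto_of_dyadic {M : ℕ → ℝ} (hM : Tendsto M atTop (𝓝 0))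
    (hosc : ∀ K n, 2 ^ K ≤ n → n ≤ 2 ^ (K + 1) → (s n - s (2 ^ K)) ^ 2 ≤ M K)
    (hsum : Summable fun K => |s (2 ^ (K + 1)) - s (2 ^ K)|) :
    ∃ l, Tendsto s atTop (𝓝 l) := by
  obtain ⟨l, hl⟩ : ∃ l, Tendsto (fun K => s (2 ^ K)) atTop (𝓝 l) := by
    refine cauchySeq_tendsto_of_complete (cauchySeq_of_summable_dist ?_)
    simpa only [Real.dist_eq, abs_sub_comm, pow_succ] using hsum
  have hbound :
      Tendsto (fun n => √(M (Nat.log 2 n)) + ‖s (2 ^ Nat.log 2 n) - l‖) atTop (𝓝 0) := by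
    simpa using (hM.sqrt.comp tendsto_nat_log_two_atTop).add
      ((tendsto_iff_norm_sub_tendsto_zero.mp hl).comp tendsto_nat_log_two_atTop)
  refine ⟨l, tendsto_iff_norm_sub_tendsto_zero.mpr (squeeze_zero' (by simp) ?_ hbound)⟩
  filter_upwards [eventually_ne_atTop 0] with n hn
  have hlo := Nat.pow_log_le_self 2 hn
  have hhi := (Nat.lt_pow_succ_log_self one_lt_two n).le
  calc ‖s n - l‖ ≤ |s n - s (2 ^ Nat.log 2 n)| + ‖s (2 ^ Nat.log 2 n) - l‖ := by
        rw [Real.norm_eq_abs, Real.norm_eq_abs]; exact abs_sub_le _ _ _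
    _ ≤ _ := by
        gcongr
        exact Real.abs_le_sqrt (hosc _ n hlo hhi)

lemma summable_abs_of_summable_sq_mul_sq {d : ℕ → ℝ}
    (hd : Summable fun K : ℕ => ((K : ℝ) + 1) ^ 2 * d K ^ 2) : Summable fun K => |d K| := by
  have hinv : Summable fun K : ℕ => 1 / ((K : ℝ) + 1) ^ 2 := by
    simpa [Nat.cast_add] using
      (summable_nat_add_iff 1).mpr (Real.summable_one_div_nat_pow.mpr one_lt_two)
  refine .of_nonneg_of_le (fun K => abs_nonneg _) (fun K => ?_) ((hd.add hinv).div_const 2)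
  -- AM-GM for `(K + 1) |d K|` and `1 / (K + 1)`
  have hK : (0 : ℝ) < K + 1 := by positivity
  have := two_mul_le_add_sq ((K + 1) * |d K|) (1 / (K + 1))
  rw [mul_pow, sq_abs, div_pow, one_pow] at this
  field_simp at this ⊢
  nlinarith

end Deterministic

lemma succ_mul_log_two_le_two_mul_log {K i : ℕ} (hi : 2 ^ K < i) :
    ((K : ℝ) + 1) * Real.log 2 ≤ 2 * Real.log i := by
  have hi' : ((2 : ℝ) ^ K) < i := by exact_mod_cast hi
  have hpos : (0 : ℝ) < 2 ^ K := by positivity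
  have hK : (K : ℝ) * Real.log 2 ≤ Real.log i := by
    rw [← Real.log_pow]; exact Real.log_le_log hpos hi'.le
  have h2 : Real.log 2 ≤ Real.log i :=
    Real.log_le_log two_pos (by exact_mod_cast (Nat.one_le_two_pow.trans_lt hi : 2 ≤ i))
  linarith

lemma summable_sum_Ioc {g : ℕ → ℝ} (hg0 : ∀ i, 0 ≤ g i) (hg : Summable g) {b : ℕ → ℕ}
    (hb : Monotone b) : Summable fun K => ∑ i ∈ Ioc (b K) (b (K + 1)), g i := by
  refine summable_of_sum_range_le (c := ∑' i, g i) (fun K => sum_nonneg fun _ _ => hg0 _)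
    fun N => ?_
  have htel :
      ∑ K ∈ range N, ∑ i ∈ Ioc (b K) (b (K + 1)), g i = ∑ i ∈ Ioc (b 0) (b N), g i := by
    induction N with
    | zero => simp
    | succ N ih =>
      rw [sum_range_succ, ih, sum_Ioc_consecutive _ (hb (Nat.zero_le N)) (hb N.le_succ)]
  rw [htel]
  exact hg.sum_le_tsum _ fun i _ => hg0 i

section Integration

variable {α : Type*} [MeasurableSpace α] {μ : Measure α}

lemma ae_summable_of_summable_integral {f : ℕ → α → ℝ} (hf0 : ∀ n x, 0 ≤ f n x)
    (hf : ∀ n, Integrable (f n) μ) (hsum : Summable fun n => ∫ x, f n x ∂μ) :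
    ∀ᵐ x ∂μ, Summable fun n => f n x := by
  have hnorm : ∑' n, eLpNorm (f n) 1 μ ≠ ⊤ := by
    have h : ∀ n, eLpNorm (f n) 1 μ = ENNReal.ofReal (∫ x, f n x ∂μ) := fun n => by
      rw [eLpNorm_one_eq_lintegral_enorm, ← ofReal_integral_norm_eq_lintegral_enorm (hf n)]
      simp_rw [Real.norm_of_nonneg (hf0 n _)]
    simp_rw [h, ← ENNReal.ofReal_tsum_of_nonneg (fun n => integral_nonneg (hf0 n)) hsum]
    exact ENNReal.ofReal_ne_top
  filter_upwards [summable_norm_of_tsum_eLpNorm_ne_top le_rfl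
    (fun n => (hf n).aestronglyMeasurable) hnorm] with x hx
  exact hx.of_norm

lemma integral_sq_sum_mul_of_orthonormal {ι : Type*} {φ : ι → α → ℝ} {s : Finset ι}
    (hL2 : ∀ i ∈ s, MemLp (φ i) 2 μ)
    (horth : ∀ i ∈ s, ∀ j ∈ s, i ≠ j → ∫ x, φ i x * φ j x ∂μ = 0)
    (hnorm : ∀ i ∈ s, ∫ x, φ i x ^ 2 ∂μ = 1) (c : ι → ℝ) :
    ∫ x, (∑ i ∈ s, c i * φ i x) ^ 2 ∂μ = ∑ i ∈ s, c i ^ 2 := by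
  classical
  have hgram : ∀ i ∈ s, ∀ j ∈ s, ∫ x, φ i x * φ j x ∂μ = if i = j then 1 else 0 := by
    intro i hi j hj
    split_ifs with hij
    · subst hij; simpa [sq] using hnorm i hi
    · exact horth i hi j hj hij
  have hint : ∀ i ∈ s, ∀ j ∈ s, Integrable (fun x => c i * c j * (φ i x * φ j x)) μ :=
    fun i hi j hj => ((hL2 i hi).integrable_mul (hL2 j hj)).const_mul _
  simp_rw [sq, sum_mul_sum, show ∀ i j x, c i * φ i x * (c j * φ j x) =
    c i * c j * (φ i x * φ j x) from fun _ _ _ => by ring]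
  rw [integral_finsetSum _ fun i hi => integrable_finsetSum _ (hint i hi)]
  refine sum_congr rfl fun i hi => ?_
  rw [integral_finsetSum _ (hint i hi)]
  simp_rw [integral_const_mul]
  rw [sum_congr rfl fun j hj => by rw [hgram i hi j hj]]
  simp [hi]

variable {S : ℕ → α → ℝ} {σ : ℕ → ℝ}

lemma integrable_sq_sub (hS : ∀ n, MemLp (S n) 2 μ) (u v : ℕ) :
    Integrable (fun x => (S v x - S u x) ^ 2) μ :=
  ((hS v).sub (hS u)).integrable_sq

lemma integrable_dyadicSqSum (hS : ∀ n, MemLp (S n) 2 μ) (a k : ℕ) :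
    Integrable (fun x => dyadicSqSum (S · x) a k) μ :=
  integrable_finsetSum _ fun _ _ => integrable_finsetSum _ fun _ _ => integrable_sq_sub hS _ _

lemma integral_dyadicSqSum (hS : ∀ n, MemLp (S n) 2 μ)
    (hσ : ∀ u v, u ≤ v → ∫ x, (S v x - S u x) ^ 2 ∂μ = σ v - σ u) (a k : ℕ) :
    ∫ x, dyadicSqSum (S · x) a k ∂μ = (k + 1) * (σ (a + 2 ^ k) - σ a) := by
  unfold dyadicSqSum
  rw [integral_finsetSum _ fun _ _ => integrable_finsetSum _ fun _ _ => integrable_sq_sub hS _ _]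
  -- every level telescopes to the increment of `σ` over the whole interval
  have hlevel : ∀ j ∈ range (k + 1), ∫ x, ∑ m ∈ range (2 ^ (k - j)),
      (S (a + (m + 1) * 2 ^ j) x - S (a + m * 2 ^ j) x) ^ 2 ∂μ = σ (a + 2 ^ k) - σ a := by
    intro j hj
    rw [integral_finsetSum _ fun _ _ => integrable_sq_sub hS _ _]
    rw [sum_congr rfl fun m _ => hσ _ _ (by gcongr; omega),
      sum_range_sub (fun m => σ (a + m * 2 ^ j)), ← pow_add,
      Nat.sub_add_cancel (Nat.lt_succ_iff.mp (mem_range.mp hj))]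
    simp
  rw [sum_congr rfl hlevel, sum_const, card_range, nsmul_eq_mul]
  push_cast
  ring

theorem ae_exists_tendsto_of_integral_sq_sub (hS : ∀ n, MemLp (S n) 2 μ)
    (hσ : ∀ u v, u ≤ v → ∫ x, (S v x - S u x) ^ 2 ∂μ = σ v - σ u)
    (hsum : Summable fun K : ℕ => ((K : ℝ) + 1) ^ 2 * (σ (2 ^ (K + 1)) - σ (2 ^ K))) :
    ∀ᵐ x ∂μ, ∃ l, Tendsto (S · x) atTop (𝓝 l) := by
  have hdyadic : ∀ K : ℕ, 2 ^ K + 2 ^ K = 2 ^ (K + 1) := fun K => by rw [pow_succ, mul_two]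
  have hosc :
      ∀ᵐ x ∂μ, Summable fun K : ℕ => ((K : ℝ) + 1) * dyadicSqSum (S · x) (2 ^ K) K := by
    refine ae_summable_of_summable_integral
      (fun K x => mul_nonneg (by positivity) (dyadicSqSum_nonneg _ _ _))
      (fun K => (integrable_dyadicSqSum hS _ _).const_mul _) ?_
    simpa only [integral_const_mul, integral_dyadicSqSum hS hσ, hdyadic, Nat.cast_add,
      Nat.cast_one, ← mul_assoc, ← sq] using hsum
  have hjump : ∀ᵐ x ∂μ,
      Summable fun K : ℕ => ((K : ℝ) + 1) ^ 2 * (S (2 ^ (K + 1)) x - S (2 ^ K) x) ^ 2 := by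
    refine ae_summable_of_summable_integral (fun K x => by positivity)
      (fun K => (integrable_sq_sub hS _ _).const_mul _) ?_
    refine hsum.congr fun K => ?_
    rw [integral_const_mul, hσ _ _ (Nat.pow_le_pow_right two_pos K.le_succ)]
  filter_upwards [hosc, hjump] with x hoscx hjumpx
  refine exists_tendsto_of_dyadic _ hoscx.tendsto_atTop_zero (fun K n hlo hhi => ?_)
    (summable_abs_of_summable_sq_mul_sq hjumpx)
  exact_mod_cast sq_sub_le_mul_dyadicSqSum (S · x) K (2 ^ K) n hlo (by rwa [hdyadic])

end Integration

lemma sum_Icc_one_sub_sum_Icc_one {M : Type*} [AddCommGroup M] (f : ℕ → M) {u v : ℕ}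
    (huv : u ≤ v) : ∑ i ∈ Icc 1 v, f i - ∑ i ∈ Icc 1 u, f i = ∑ i ∈ Ioc u v, f i := by
  have hIcc : ∀ n, Icc 1 n = Ioc 0 n := Icc_add_one_left_eq_Ioc 0
  rw [hIcc, hIcc, sub_eq_iff_eq_add', sum_Ioc_consecutive _ u.zero_le huv]

lemma summable_sq_mul_sum_Ioc_two_pow {c : ℕ → ℝ}
    (hc : Summable fun i => c i ^ 2 * Real.log i ^ 2) :
    Summable fun K : ℕ => ((K : ℝ) + 1) ^ 2 * ∑ i ∈ Ioc (2 ^ K) (2 ^ (K + 1)), c i ^ 2 := by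
  have hlog2 : 0 < Real.log 2 := Real.log_pos one_lt_two
  have hblocks := summable_sum_Ioc (fun i => by positivity) hc
    fun _ _ h => Nat.pow_le_pow_right two_pos h
  refine .of_nonneg_of_le (fun K => by positivity) (fun K => ?_)
    (hblocks.mul_left (4 / Real.log 2 ^ 2))
  rw [mul_sum, mul_sum]
  refine sum_le_sum fun i hi => ?_
  have h := succ_mul_log_two_le_two_mul_log (mem_Ioc.mp hi).1
  rw [div_mul_eq_mul_div, le_div_iff₀ (by positivity)]
  nlinarith [sq_nonneg (c i), mul_self_le_mul_self (by positivity) h]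

end RademacherMenchoff

open RademacherMenchoff

theorem stmt_9_general {α : Type*} [MeasurableSpace α] (μ : Measure α)
    (φ : ℕ → α → ℝ)
    (hL2 : ∀ i, 1 ≤ i → MemLp (φ i) 2 μ)
    (horth : ∀ i j, 1 ≤ i → 1 ≤ j → i ≠ j → ∫ x, φ i x * φ j x ∂μ = 0)
    (hnorm : ∀ i, 1 ≤ i → ∫ x, (φ i x) ^ 2 ∂μ = 1)
    (c : ℕ → ℝ) (hc : Summable fun i => c i ^ 2 * Real.log i ^ 2) :
    ∀ᵐ x ∂μ, ∃ l : ℝ,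
      Filter.Tendsto (fun n => ∑ i ∈ Finset.Icc 1 n, c i * φ i x) Filter.atTop (nhds l) := by
  have hpos : ∀ {u v i : ℕ}, i ∈ Ioc u v → 1 ≤ i := fun hi => by
    have := (mem_Ioc.mp hi).1; omega
  refine ae_exists_tendsto_of_integral_sq_sub (σ := fun n => ∑ i ∈ Icc 1 n, c i ^ 2)
    (fun n => memLp_finsetSum _ fun i hi => (hL2 i (mem_Icc.mp hi).1).const_mul (c i))
    (fun u v huv => ?_) ?_
  · simp_rw [sum_Icc_one_sub_sum_Icc_one _ huv]
    exact integral_sq_sum_mul_of_orthonormal (fun i hi => hL2 i (hpos hi))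
      (fun i hi j hj => horth i j (hpos hi) (hpos hj)) (fun i hi => hnorm i (hpos hi)) c
  · simpa only [sum_Icc_one_sub_sum_Icc_one _ (Nat.pow_le_pow_right two_pos (Nat.le_succ _))]
      using summable_sq_mul_sum_Ioc_two_pow hc

/-- Rademacher–Menchoff theorem.  Let `(φ_i)_{i≥1}` be an orthonormal system
in `L²(μ)` for a finite measure `μ`.  If `∑_{i≥2} c_i² (log i)² < ∞`, then the orthogonal
series `∑_{i≥1} c_i φ_i(x)` converges for `μ`-almost every `x`. -/
theorem stmt_9 {α : Type*} [MeasurableSpace α] (μ : Measure α) [IsFiniteMeasure μ]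
    (φ : ℕ → α → ℝ)
    (hL2 : ∀ i, 1 ≤ i → MemLp (φ i) 2 μ)
    (horth : ∀ i j, 1 ≤ i → 1 ≤ j → i ≠ j → ∫ x, φ i x * φ j x ∂μ = 0)
    (hnorm : ∀ i, 1 ≤ i → ∫ x, (φ i x) ^ 2 ∂μ = 1)
    (c : ℕ → ℝ) (hc : Summable fun i => c i ^ 2 * Real.log i ^ 2) :
    ∀ᵐ x ∂μ, ∃ l : ℝ,
      Filter.Tendsto (fun n => ∑ i ∈ Finset.Icc 1 n, c i * φ i x) Filter.atTop (nhds l) :=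
  stmt_9_general μ φ hL2 horth hnorm c hc
end

section
/- Let (μ_n)_{n≥0} be a normal sequence with conjugate weights (α_n)_{n≥0} (i.e. α_0 = 1 and μ_n = α_n / ∑_{k=0}^n α_k for n ≥ 1). Let (X_n)_{n≥1} be square-integrable random variables and set X̄_n = (∑_{i=0}^{n−1} α_i (X_{i+1} − E X_{i+1})) / (∑_{i=0}^{n−1} α_i). If both series ∑_{n≥0} μ_n² Var(X_{n+1}) and ∑_{n≥0} μ_n √(Var(X_{n+1}) · Var(X̄_n)) converge, then X̄_n → 0 almost surely; that is, (X_n) satisfies the generalized strong law of large numbers with weights (α_n). -/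
/-!
Write `Y_n = X_{n+1} - E X_{n+1}`. Since `μ_n = α_n / (α_0 + ⋯ + α_n)`, the weighted averages obey
`X̄_{n+1} = (1 - μ_n) X̄_n + μ_n Y_n`, hence `X̄_{n+1}² ≤ (1 - μ_n) X̄_n² + e_n` with
`e_n = 2 μ_n |Y_n X̄_n| + μ_n² Y_n²`. By Cauchy–Schwarz, `E e_n ≤ 2 μ_n √(Var X_{n+1} Var X̄_n) +
μ_n² Var X_{n+1}`, which is summable, so `∑ e_n < ∞` almost surely. Along such a path, iterating
the recursion with `1 - μ ≤ exp (-μ)` and `∑ μ_n = ∞` forces `X̄_n² → 0`.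
-/

open Filter Finset MeasureTheory ProbabilityTheory
open scoped Topology

section Analysis

variable {α : Type*} {m : MeasurableSpace α} {μ : Measure α}

theorem ae_summable_norm_of_summable_integral_norm {E : Type*} [NormedAddCommGroup E]
    {f : ℕ → α → E} (hf : ∀ n, Integrable (f n) μ)
    (hs : Summable fun n => ∫ x, ‖f n x‖ ∂μ) : ∀ᵐ x ∂μ, Summable fun n => ‖f n x‖ := by
  refine summable_norm_of_tsum_eLpNorm_ne_top le_rfl (fun n => (hf n).aestronglyMeasurable) ?_
  simp_rw [eLpNorm_one_eq_lintegral_enorm, ← ofReal_integral_norm_eq_lintegral_enorm (hf _),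
    ← ENNReal.ofReal_tsum_of_nonneg (fun n => integral_nonneg fun _ => norm_nonneg _) hs]
  exact ENNReal.ofReal_ne_top

theorem integral_abs_mul_le_sqrt_mul {f g : α → ℝ} (hf : MemLp f 2 μ) (hg : MemLp g 2 μ) :
    ∫ x, |f x * g x| ∂μ ≤ √((∫ x, f x ^ 2 ∂μ) * ∫ x, g x ^ 2 ∂μ) := by
  have h := integral_mul_norm_le_Lp_mul_Lq Real.HolderConjugate.two_two
    (by simpa using hf) (by simpa using hg)
  simp only [Real.norm_eq_abs, Real.rpow_two, sq_abs] at h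
  rw [Real.sqrt_mul (integral_nonneg fun _ => sq_nonneg _), Real.sqrt_eq_rpow, Real.sqrt_eq_rpow]
  simpa [abs_mul] using h

end Analysis

theorem le_exp_neg_sum_mul_add_sum_Ico {q e t : ℕ → ℝ} (hq : ∀ n, 0 ≤ q n) (ht : ∀ n, 0 ≤ t n)
    (he : ∀ n, 0 ≤ e n) (hrec : ∀ n, t (n + 1) ≤ (1 - q n) * t n + e n) {m n : ℕ} (hmn : m ≤ n) :
    t n ≤ Real.exp (-∑ i ∈ Ico m n, q i) * t m + ∑ k ∈ Ico m n, e k := by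
  induction n, hmn using Nat.le_induction with
  | base => simp
  | succ n hmn ih =>
    have hexp : 1 - q n ≤ Real.exp (-q n) := by linarith [Real.add_one_le_exp (-q n)]
    have hexp_le_one : Real.exp (-q n) ≤ 1 := Real.exp_le_one_iff.2 (by linarith [hq n])
    have hsum_nonneg : 0 ≤ ∑ k ∈ Ico m n, e k := sum_nonneg fun k _ => he k
    rw [sum_Ico_succ_top hmn, sum_Ico_succ_top hmn, neg_add, Real.exp_add]
    calc t (n + 1) ≤ Real.exp (-q n) * t n + e n := by
          nlinarith [hrec n, mul_le_mul_of_nonneg_right hexp (ht n)]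
      _ ≤ Real.exp (-q n) * (Real.exp (-∑ i ∈ Ico m n, q i) * t m + ∑ k ∈ Ico m n, e k) + e n := by
          gcongr
      _ ≤ _ := by nlinarith [mul_le_mul_of_nonneg_right hexp_le_one hsum_nonneg]

theorem tendsto_zero_of_le_one_sub_mul_add {q e t : ℕ → ℝ} (hq : ∀ n, 0 ≤ q n)
    (ht : ∀ n, 0 ≤ t n) (he : ∀ n, 0 ≤ e n) (hrec : ∀ n, t (n + 1) ≤ (1 - q n) * t n + e n)
    (hdiv : Tendsto (fun n => ∑ i ∈ range n, q i) atTop atTop) (hsum : Summable e) :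
    Tendsto t atTop (𝓝 0) := by
  rw [Metric.tendsto_atTop]
  intro ε hε
  obtain ⟨m, hm⟩ := ((tendsto_sum_nat_add e).eventually (gt_mem_nhds (half_pos hε))).exists
  have hdecay : Tendsto (fun n => Real.exp (-∑ i ∈ Ico m n, q i) * t m) atTop (𝓝 0) := by
    have : Tendsto (fun n => ∑ i ∈ Ico m n, q i) atTop atTop :=
      (tendsto_atTop_add_const_right _ (-∑ i ∈ range m, q i) hdiv).congr' <|
        (eventually_ge_atTop m).mono fun n hn => by dsimp only; rw [sum_Ico_eq_sub _ hn]; ring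
    simpa using (Real.tendsto_exp_neg_atTop_nhds_zero.comp this).mul_const (t m)
  obtain ⟨N, hN⟩ := ((hdecay.eventually (gt_mem_nhds (half_pos hε))).and
    (eventually_ge_atTop m)).exists_forall_of_atTop
  refine ⟨N, fun n hn => ?_⟩
  obtain ⟨hsmall, hmn⟩ := hN n hn
  have htail : ∑ k ∈ Ico m n, e k ≤ ∑' k, e (k + m) := by
    rw [sum_Ico_eq_sum_range]
    simpa [add_comm] using
      (hsum.comp_injective (add_left_injective m)).sum_le_tsum (range (n - m)) fun k _ => he _
  rw [Real.dist_eq, sub_zero, abs_of_nonneg (ht n)]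
  linarith [le_exp_neg_sum_mul_add_sum_Ico hq ht he hrec hmn]

theorem NormalSeq.mem_Icc {μs : ℕ → ℝ} (hμs : NormalSeq μs) (n : ℕ) : μs n ∈ Set.Icc 0 1 := by
  rcases Nat.eq_zero_or_pos n with rfl | hn
  · simp [hμs.1]
  · exact Set.Ioo_subset_Icc_self (hμs.2.1 n hn)

theorem NormalSeq.sum_range_succ_pos {μs a : ℕ → ℝ} (hμs : NormalSeq μs) (ha0 : a 0 = 1)
    (hconj : ∀ n, μs n = a n / ∑ k ∈ range (n + 1), a k) (n : ℕ) :
    0 < ∑ k ∈ range (n + 1), a k := by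
  induction n with
  | zero => simp [ha0]
  | succ n ih =>
    obtain ⟨hμpos, hμlt⟩ := hμs.2.1 (n + 1) n.succ_pos
    have hne : ∑ k ∈ range (n + 2), a k ≠ 0 := fun h => by simp [hconj, h] at hμpos
    have hsplit : ∑ k ∈ range (n + 1), a k = (1 - μs (n + 1)) * ∑ k ∈ range (n + 2), a k := by
      rw [hconj, sub_mul, div_mul_cancel₀ _ hne, sum_range_succ _ (n + 1)]; ring
    rw [hsplit] at ih
    exact pos_of_mul_pos_right ih (by linarith)

noncomputable def weightedAvg (a y : ℕ → ℝ) (n : ℕ) : ℝ :=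
  (∑ i ∈ range n, a i * y i) / ∑ i ∈ range n, a i

theorem weightedAvg_succ {a : ℕ → ℝ} (y : ℕ → ℝ) (hb : ∀ k, ∑ i ∈ range (k + 1), a i ≠ 0)
    (n : ℕ) :
    weightedAvg a y (n + 1) =
      (1 - a n / ∑ i ∈ range (n + 1), a i) * weightedAvg a y n +
        a n / (∑ i ∈ range (n + 1), a i) * y n := by
  unfold weightedAvg
  rcases n with _ | n
  · simp [mul_div_right_comm]
  · have h := hb n
    have h' := hb (n + 1)
    simp only [sum_range_succ _ (n + 1)] at h' ⊢
    field_simp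
    ring

theorem sq_le_one_sub_mul_sq_add {μ z y : ℝ} (hμ : μ ∈ Set.Icc (0 : ℝ) 1) :
    ((1 - μ) * z + μ * y) ^ 2 ≤ (1 - μ) * z ^ 2 + (2 * μ * |y * z| + μ ^ 2 * y ^ 2) := by
  obtain ⟨h0, h1⟩ := hμ
  have hcross : (1 - μ) * μ * (y * z) ≤ μ * |y * z| :=
    le_trans (mul_le_mul_of_nonneg_left (le_abs_self _) (by nlinarith))
      (mul_le_mul_of_nonneg_right (by nlinarith) (abs_nonneg _))
  nlinarith [mul_nonneg (mul_nonneg h0 (sub_nonneg.2 h1)) (sq_nonneg z)]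

theorem ae_tendsto_zero_of_eq_one_sub_mul_add {Ω : Type*} {m0 : MeasurableSpace Ω}
    {P : Measure Ω} {μs : ℕ → ℝ} {Z Y : ℕ → Ω → ℝ} (hμs : ∀ n, μs n ∈ Set.Icc 0 1)
    (hdiv : Tendsto (fun n => ∑ i ∈ range n, μs i) atTop atTop)
    (hZ : ∀ n, MemLp (Z n) 2 P) (hY : ∀ n, MemLp (Y n) 2 P)
    (hrec : ∀ n ω, Z (n + 1) ω = (1 - μs n) * Z n ω + μs n * Y n ω)
    (hsq : Summable fun n => μs n ^ 2 * ∫ ω, Y n ω ^ 2 ∂P)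
    (hcross : Summable fun n => μs n * √((∫ ω, Y n ω ^ 2 ∂P) * ∫ ω, Z n ω ^ 2 ∂P)) :
    ∀ᵐ ω ∂P, Tendsto (fun n => Z n ω) atTop (𝓝 0) := by
  set e : ℕ → Ω → ℝ := fun n ω => 2 * μs n * |Y n ω * Z n ω| + μs n ^ 2 * Y n ω ^ 2
  have he_nonneg : ∀ n ω, 0 ≤ e n ω := fun n ω => by
    have := (hμs n).1
    positivity
  have hYZ : ∀ n, Integrable (fun ω => |Y n ω * Z n ω|) P := fun n =>
    ((hY n).integrable_mul (hZ n)).abs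
  have he_int : ∀ n, Integrable (e n) P := fun n =>
    ((hYZ n).const_mul _).add ((hY n).integrable_sq.const_mul _)
  have he_le : ∀ n, ∫ ω, ‖e n ω‖ ∂P ≤
      2 * (μs n * √((∫ ω, Y n ω ^ 2 ∂P) * ∫ ω, Z n ω ^ 2 ∂P)) + μs n ^ 2 * ∫ ω, Y n ω ^ 2 ∂P := by
    intro n
    simp_rw [Real.norm_of_nonneg (he_nonneg _ _)]
    rw [integral_add ((hYZ n).const_mul _) ((hY n).integrable_sq.const_mul _),
      integral_const_mul, integral_const_mul, mul_assoc]
    gcongr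
    · exact (hμs n).1
    · exact integral_abs_mul_le_sqrt_mul (hY n) (hZ n)
  have he_integral_summable : Summable fun n => ∫ ω, ‖e n ω‖ ∂P :=
    ((hcross.mul_left 2).add hsq).of_nonneg_of_le
      (fun n => integral_nonneg fun _ => norm_nonneg _) he_le
  have he_summable : ∀ᵐ ω ∂P, Summable fun n => e n ω := by
    filter_upwards [ae_summable_norm_of_summable_integral_norm he_int he_integral_summable]
      with ω hω
    simpa only [Real.norm_of_nonneg (he_nonneg _ _)] using hω
  filter_upwards [he_summable] with ω hω
  have hsq_tendsto : Tendsto (fun n => Z n ω ^ 2) atTop (𝓝 0) :=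
    tendsto_zero_of_le_one_sub_mul_add (fun n => (hμs n).1) (fun n => sq_nonneg _)
      (fun n => he_nonneg n ω) (fun n => hrec n ω ▸ sq_le_one_sub_mul_sq_add (hμs n)) hdiv hω
  have habs := hsq_tendsto.sqrt
  simp only [Real.sqrt_sq_eq_abs, Real.sqrt_zero] at habs
  exact (tendsto_zero_iff_abs_tendsto_zero _).2 habs

/-- Let `(μ_n)` be a normal sequence with conjugate weights `(α_n)`
(`α_0 = 1`, `μ_n = α_n / ∑_{k≤n} α_k`).  For square-integrable random variables `(X_n)` set
`X̄_n = (∑_{i=0}^{n−1} α_i (X_{i+1} − E X_{i+1})) / (∑_{i=0}^{n−1} α_i)`.  If both series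
`∑ μ_n² Var(X_{n+1})` and `∑ μ_n √(Var(X_{n+1}) Var(X̄_n))` converge, then `X̄_n → 0`
almost surely. -/
theorem stmt_14 {Ω : Type*} {m0 : MeasurableSpace Ω} (P : Measure Ω) [IsProbabilityMeasure P]
    (μs a : ℕ → ℝ) (hμs : NormalSeq μs)
    (ha0 : a 0 = 1) (hconj : ∀ n, μs n = a n / ∑ k ∈ Finset.range (n + 1), a k)
    (X : ℕ → Ω → ℝ) (hL2 : ∀ n, MemLp (X n) 2 P)
    (Xbar : ℕ → Ω → ℝ)
    (hXbar : ∀ n ω, Xbar n ω =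
      (∑ i ∈ Finset.range n, a i * (X (i + 1) ω - ∫ ω', X (i + 1) ω' ∂P)) /
        ∑ i ∈ Finset.range n, a i)
    (hser1 : Summable fun n => μs n ^ 2 * variance (X (n + 1)) P)
    (hser2 : Summable fun n =>
      μs n * Real.sqrt (variance (X (n + 1)) P * variance (Xbar n) P)) :
    ∀ᵐ ω ∂P, Filter.Tendsto (fun n => Xbar n ω) Filter.atTop (nhds 0) := by
  set Y : ℕ → Ω → ℝ := fun n ω => X (n + 1) ω - ∫ ω', X (n + 1) ω' ∂P
  have hY : ∀ n, MemLp (Y n) 2 P := fun n => (hL2 (n + 1)).sub (memLp_const _)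
  have hY_mean : ∀ n, ∫ ω, Y n ω ∂P = 0 := fun n => by
    simp [Y, integral_sub ((hL2 (n + 1)).integrable one_le_two) (integrable_const _)]
  have hXbar_eq : ∀ n, Xbar n = fun ω => (∑ i ∈ range n, a i * Y i ω) / ∑ i ∈ range n, a i :=
    fun n => funext (hXbar n)
  have hXbar_L2 : ∀ n, MemLp (Xbar n) 2 P := fun n => by
    simp_rw [hXbar_eq n, div_eq_mul_inv]
    exact (memLp_finsetSum _ fun i _ => (hY i).const_mul (a i)).mul_const _
  have hXbar_mean : ∀ n, ∫ ω, Xbar n ω ∂P = 0 := fun n => by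
    rw [hXbar_eq n, integral_div,
      integral_finsetSum _ fun i _ => ((hY i).integrable one_le_two).const_mul (a i)]
    simp [integral_const_mul, hY_mean]
  have hvar_X : ∀ n, variance (X (n + 1)) P = ∫ ω, Y n ω ^ 2 ∂P := fun n =>
    variance_eq_integral (hL2 (n + 1)).aestronglyMeasurable.aemeasurable
  have hvar_Xbar : ∀ n, variance (Xbar n) P = ∫ ω, Xbar n ω ^ 2 ∂P := fun n =>
    variance_of_integral_eq_zero (hXbar_L2 n).aestronglyMeasurable.aemeasurable (hXbar_mean n)
  have hrec : ∀ n ω, Xbar (n + 1) ω = (1 - μs n) * Xbar n ω + μs n * Y n ω := fun n ω => by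
    rw [hXbar, hXbar, hconj]
    exact weightedAvg_succ (Y · ω) (fun k => (hμs.sum_range_succ_pos ha0 hconj k).ne') n
  simp_rw [hvar_X, hvar_Xbar] at hser1 hser2
  exact ae_tendsto_zero_of_eq_one_sub_mul_add hμs.mem_Icc hμs.2.2.1 hXbar_L2 hY hrec hser1 hser2
end

section
/- Let (X_n)_{n≥1} be quasi-stationary random variables with zero expectations: E X_i = 0, Var(X_i) = σ_i² < ∞, and |Cov(X_i, X_j)| ≤ ρ(|i − j|) σ_i σ_j for all i, j, where (ρ(k))_{k≥0} is a sequence of nonnegative numbers with ρ(0) = 1. If the real coefficients (β_i)_{i≥1} satisfy ∑_{i≥2} β_i² σ_i² (log i)² (∑_{j=0}^i ρ(j)) < ∞, then the series ∑_{i≥1} β_i X_i converges almost surely. -/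
/-!
Menchoff's chaining argument. If on a block `(a, a + 2 ^ p]` the second moment of every sub-block
sum `∑_{c < i ≤ d} Y i` is at most an additive weight `∑_{c < i ≤ d} g i`, then splitting the block
in two halves `p` times bounds the second moment of the maximal partial sum by
`(p + 1) ^ 2 * ∑ g`. Quasi-stationarity provides such a weight, `g i = 2 β_i² σ_i² ∑_{j ≤ i} ρ j`,
on each dyadic block `(2 ^ k, 2 ^ (k + 1)]` (Schur's test for the covariance matrix; the factor `2`
counts the lags on both sides of `i`), and there `(k + 1) ^ 2 ≤ C log² i`. Writing `Mₖ` and `Sₖ`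
for the maximal partial sum and the full sum over the `k`-th dyadic block, the hypothesis thus
gives `E ∑ₖ Mₖ² < ∞` and `E ∑ₖ (k + 1)² Sₖ² < ∞`. Almost surely, then, `∑ₖ |Sₖ| < ∞`
(Cauchy–Schwarz against `1 / (k + 1)`) and `Mₖ → 0`, which is the oscillation of the partial sums
inside the `k`-th block.
-/

open Filter Finset MeasureTheory ProbabilityTheory
open scoped Topology

theorem sum_range_sum_Ioc_eq_sum_Ioc {M : Type*} [AddCommMonoid M] {a : ℕ → ℕ} (ha : Monotone a)
    (f : ℕ → M) (K : ℕ) :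
    ∑ k ∈ range K, ∑ i ∈ Ioc (a k) (a (k + 1)), f i = ∑ i ∈ Ioc (a 0) (a K), f i := by
  induction K with
  | zero => simp
  | succ K ih =>
    rw [sum_range_succ, ih, sum_Ioc_consecutive _ (ha K.zero_le) (ha K.le_succ)]

theorem sum_sum_mul_mul_le_sum_sq_mul_sum {ι : Type*} (s : Finset ι) {r : ι → ι → ℝ}
    (hr : ∀ i j, 0 ≤ r i j) (hr_symm : ∀ i j, r i j = r j i) (u : ι → ℝ) :
    ∑ i ∈ s, ∑ j ∈ s, r i j * (u i * u j) ≤ ∑ i ∈ s, u i ^ 2 * ∑ j ∈ s, r i j := by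
  have hswap : ∑ i ∈ s, ∑ j ∈ s, r i j * u j ^ 2 = ∑ i ∈ s, ∑ j ∈ s, r i j * u i ^ 2 := by
    rw [sum_comm]
    simp_rw [hr_symm]
  calc ∑ i ∈ s, ∑ j ∈ s, r i j * (u i * u j)
      ≤ ∑ i ∈ s, ∑ j ∈ s, (r i j * u i ^ 2 + r i j * u j ^ 2) / 2 :=
        sum_le_sum fun i _ => sum_le_sum fun j _ => by
          nlinarith [mul_nonneg (hr i j) (sq_nonneg (u i - u j))]
    _ = ∑ i ∈ s, u i ^ 2 * ∑ j ∈ s, r i j := by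
        simp_rw [← sum_div, sum_add_distrib, hswap, mul_sum, mul_comm (u _ ^ 2)]
        ring

theorem sum_range_dist_le {ρ : ℕ → ℝ} (hρ : ∀ k, 0 ≤ ρ k) (i : ℕ) :
    ∑ j ∈ range (2 * i + 1), ρ (Nat.dist i j) ≤ 2 * ∑ j ∈ range (i + 1), ρ j := by
  have hleft : ∑ j ∈ range (i + 1), ρ (Nat.dist i j) = ∑ j ∈ range (i + 1), ρ j := by
    rw [← sum_range_reflect]
    refine sum_congr rfl fun j hj => ?_
    rw [mem_range] at hj
    congr 1
    simp only [Nat.dist]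
    omega
  have hright : ∑ k ∈ range i, ρ (Nat.dist i (i + 1 + k)) ≤ ∑ j ∈ range (i + 1), ρ j := by
    rw [sum_range_succ']
    refine le_add_of_le_of_nonneg (le_of_eq (sum_congr rfl fun k _ => ?_)) (hρ 0)
    congr 1
    simp only [Nat.dist]
    omega
  rw [show 2 * i + 1 = (i + 1) + i by ring, sum_range_add, hleft]
  linarith

-- `(x + y)² ≤ (1 + t) x² + (1 + 1 / t) y²` at `t = p + 1`, multiplied by `t`.
theorem succ_mul_add_sq_le (p x y : ℝ) :
    (p + 1) * (x + y) ^ 2 ≤ (p + 1) * (p + 2) * x ^ 2 + (p + 2) * y ^ 2 := by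
  nlinarith [sq_nonneg ((p + 1) * x - y)]

theorem summable_of_summable_mul_sq {w x : ℕ → ℝ} (hw : ∀ k, 0 < w k)
    (hwx : Summable fun k => w k * x k ^ 2) (hw_inv : Summable fun k => (w k)⁻¹) :
    Summable x := by
  refine Summable.of_norm_bounded ((hwx.add hw_inv).div_const 2) fun k => ?_
  have hwk := hw k
  have key : 2 * |x k| ≤ w k * x k ^ 2 + (w k)⁻¹ := by
    have h := two_mul_le_add_sq (w k * |x k|) 1
    rw [← sq_abs (x k)]
    field_simp
    nlinarith [abs_nonneg (x k)]
  rw [Real.norm_eq_abs]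
  linarith

theorem succ_sq_le_mul_log_sq {k i : ℕ} (hi : 2 ^ k < i) :
    ((k : ℝ) + 1) ^ 2 ≤ (2 / Real.log 2) ^ 2 * Real.log i ^ 2 := by
  have hlog2 : 0 < Real.log 2 := Real.log_pos one_lt_two
  have hpow : ((2 : ℝ) ^ (k + 1)) ≤ (i : ℝ) ^ 2 := by
    have : 2 ^ (k + 1) ≤ i ^ 2 := by
      rw [pow_succ, sq]
      exact Nat.mul_le_mul hi.le (by have := Nat.one_le_two_pow (n := k); omega)
    exact_mod_cast this
  have hlog : ((k : ℝ) + 1) * Real.log 2 ≤ 2 * Real.log i := by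
    have := Real.log_le_log (by positivity) hpow
    rw [Real.log_pow, Real.log_pow] at this
    exact_mod_cast this
  rw [div_pow, div_mul_eq_mul_div, le_div_iff₀ (by positivity), ← mul_pow, ← mul_pow]
  exact pow_le_pow_left₀ (by positivity) hlog 2

theorem summable_succ_sq_mul_sum_Ioc_two_pow {w : ℕ → ℝ} (hw : ∀ i, 0 ≤ w i)
    (hsum : Summable fun i : ℕ => w i * Real.log i ^ 2) :
    Summable fun k : ℕ => ((k : ℝ) + 1) ^ 2 * ∑ i ∈ Ioc (2 ^ k) (2 ^ (k + 1)), w i := by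
  set C := (2 / Real.log 2) ^ 2
  have hterm : ∀ k : ℕ, ((k : ℝ) + 1) ^ 2 * ∑ i ∈ Ioc (2 ^ k) (2 ^ (k + 1)), w i
      ≤ ∑ i ∈ Ioc (2 ^ k) (2 ^ (k + 1)), C * (w i * Real.log i ^ 2) := by
    intro k
    rw [mul_sum]
    refine sum_le_sum fun i hi => ?_
    calc ((k : ℝ) + 1) ^ 2 * w i ≤ C * Real.log i ^ 2 * w i :=
          mul_le_mul_of_nonneg_right (succ_sq_le_mul_log_sq (mem_Ioc.1 hi).1) (hw i)
      _ = C * (w i * Real.log i ^ 2) := by ring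
  refine summable_of_sum_range_le (c := C * ∑' i, w i * Real.log i ^ 2)
    (fun k => by have := sum_nonneg fun i (_ : i ∈ Ioc (2 ^ k) (2 ^ (k + 1))) => hw i; positivity)
    fun K => ?_
  calc ∑ k ∈ range K, ((k : ℝ) + 1) ^ 2 * ∑ i ∈ Ioc (2 ^ k) (2 ^ (k + 1)), w i
      ≤ ∑ k ∈ range K, ∑ i ∈ Ioc (2 ^ k) (2 ^ (k + 1)), C * (w i * Real.log i ^ 2) :=
        sum_le_sum fun k _ => hterm k
    _ = C * ∑ i ∈ Ioc 1 (2 ^ K), w i * Real.log i ^ 2 := by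
        rw [sum_range_sum_Ioc_eq_sum_Ioc (pow_right_mono₀ one_le_two), pow_zero, mul_sum]
    _ ≤ C * ∑' i, w i * Real.log i ^ 2 :=
        mul_le_mul_of_nonneg_left
          (hsum.sum_le_tsum _ fun i _ => mul_nonneg (hw i) (sq_nonneg _)) (sq_nonneg _)

theorem exists_tendsto_sum_Icc_of_dyadic {y m : ℕ → ℝ} (hm : Tendsto m atTop (𝓝 0))
    (hosc : ∀ k n, 2 ^ k ≤ n → n ≤ 2 ^ (k + 1) → |∑ i ∈ Ioc (2 ^ k) n, y i| ≤ m k)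
    (hsum : Summable fun k => ∑ i ∈ Ioc (2 ^ k) (2 ^ (k + 1)), y i) :
    ∃ L, Tendsto (fun n => ∑ i ∈ Icc 1 n, y i) atTop (𝓝 L) := by
  simp_rw [show ∀ n, Icc 1 n = Ioc 0 n from Icc_succ_left_eq_Ioc 0]
  set s : ℕ → ℝ := fun n => ∑ i ∈ Ioc 0 n, y i
  obtain ⟨L, hL⟩ := hsum
  have hdyadic : Tendsto (fun k => s (2 ^ k)) atTop (𝓝 (s 1 + L)) := by
    refine (tendsto_const_nhds.add hL.tendsto_sum_nat).congr fun K => ?_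
    rw [sum_range_sum_Ioc_eq_sum_Ioc (pow_right_mono₀ one_le_two), pow_zero]
    exact sum_Ioc_consecutive _ zero_le_one Nat.one_le_two_pow
  have hlog : Tendsto (Nat.log 2) atTop atTop :=
    tendsto_atTop_atTop.2 fun e => ⟨2 ^ e, fun n hn =>
      Nat.le_log_of_pow_le one_lt_two hn⟩
  refine ⟨s 1 + L, tendsto_iff_norm_sub_tendsto_zero.2 <| squeeze_zero' (by simp)
    ((eventually_ge_atTop 1).mono fun n hn => ?_)
    (by simpa using (((hdyadic.sub_const (s 1 + L)).norm.add hm).comp hlog))⟩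
  set e := Nat.log 2 n
  have hsplit : s n = s (2 ^ e) + ∑ i ∈ Ioc (2 ^ e) n, y i :=
    (sum_Ioc_consecutive _ (Nat.zero_le _) (Nat.pow_log_le_self 2 (by omega))).symm
  calc ‖s n - (s 1 + L)‖ ≤ ‖s (2 ^ e) - (s 1 + L)‖ + |∑ i ∈ Ioc (2 ^ e) n, y i| := by
        rw [hsplit, Real.norm_eq_abs, Real.norm_eq_abs]
        exact (abs_add_le _ _).trans_eq' (by ring_nf)
    _ ≤ ‖s (2 ^ e) - (s 1 + L)‖ + m e := by
        gcongr
        exact hosc e n (Nat.pow_log_le_self 2 (by omega)) (Nat.lt_pow_succ_log_self one_lt_two n).le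

section

variable {Ω : Type*} {m0 : MeasurableSpace Ω} {μ : Measure Ω}

theorem ae_summable_of_summable_integral {f : ℕ → Ω → ℝ} (hf : ∀ n ω, 0 ≤ f n ω)
    (hint : ∀ n, Integrable (f n) μ) (hsum : Summable fun n => ∫ ω, f n ω ∂μ) :
    ∀ᵐ ω ∂μ, Summable fun n => f n ω := by
  have hnorm : ∀ n, ∫ ω, ‖f n ω‖ ∂μ = ∫ ω, f n ω ∂μ := fun n =>
    integral_congr_ae (Eventually.of_forall fun ω => Real.norm_of_nonneg (hf n ω))
  have hae := summable_norm_of_tsum_eLpNorm_ne_top le_rfl (fun n => (hint n).aestronglyMeasurable)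
    (μ := μ) (p := 1) (by
      simp_rw [eLpNorm_one_eq_lintegral_enorm, ← ofReal_integral_norm_eq_lintegral_enorm (hint _),
        hnorm, ← ENNReal.ofReal_tsum_of_nonneg (fun n => integral_nonneg (hf n)) hsum]
      exact ENNReal.ofReal_ne_top)
  filter_upwards [hae] with ω hω
  simpa only [Real.norm_of_nonneg (hf _ ω)] using hω

theorem integral_sq_sum_le {ι : Type*} (s : Finset ι) {X : ι → Ω → ℝ}
    (hX : ∀ i ∈ s, MemLp (X i) 2 μ) {r : ι → ι → ℝ} (hr : ∀ i j, 0 ≤ r i j)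
    (hr_symm : ∀ i j, r i j = r j i) (σ β : ι → ℝ)
    (hcov : ∀ i ∈ s, ∀ j ∈ s, |∫ ω, X i ω * X j ω ∂μ| ≤ r i j * σ i * σ j) :
    ∫ ω, (∑ i ∈ s, β i * X i ω) ^ 2 ∂μ ≤ ∑ i ∈ s, (β i * σ i) ^ 2 * ∑ j ∈ s, r i j := by
  have hint : ∀ i ∈ s, ∀ j ∈ s, Integrable (fun ω => X i ω * X j ω) μ :=
    fun i hi j hj => (hX i hi).integrable_mul (hX j hj)
  have hexpand : ∫ ω, (∑ i ∈ s, β i * X i ω) ^ 2 ∂μ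
      = ∑ i ∈ s, ∑ j ∈ s, β i * β j * ∫ ω, X i ω * X j ω ∂μ := by
    have hpt : ∀ ω, (∑ i ∈ s, β i * X i ω) ^ 2
        = ∑ i ∈ s, ∑ j ∈ s, β i * β j * (X i ω * X j ω) := fun ω => by
      rw [sq, sum_mul_sum]
      exact sum_congr rfl fun i _ => sum_congr rfl fun j _ => by ring
    simp_rw [hpt]
    rw [integral_finsetSum _ fun i hi => integrable_finsetSum _ fun j hj =>
      (hint i hi j hj).const_mul _]
    refine sum_congr rfl fun i hi => ?_
    rw [integral_finsetSum _ fun j hj => (hint i hi j hj).const_mul _]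
    simp_rw [integral_const_mul]
  have hterm : ∀ i ∈ s, ∀ j ∈ s, β i * β j * ∫ ω, X i ω * X j ω ∂μ
      ≤ r i j * (|β i * σ i| * |β j * σ j|) := fun i hi j hj =>
    calc β i * β j * ∫ ω, X i ω * X j ω ∂μ
        ≤ |β i * β j| * |∫ ω, X i ω * X j ω ∂μ| := by rw [← abs_mul]; exact le_abs_self _
      _ ≤ |β i * β j| * (r i j * |σ i * σ j|) := by
          gcongr
          refine (hcov i hi j hj).trans ?_
          rw [mul_assoc]
          exact mul_le_mul_of_nonneg_left (le_abs_self _) (hr i j)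
      _ = r i j * (|β i * σ i| * |β j * σ j|) := by simp only [abs_mul]; ring
  calc ∫ ω, (∑ i ∈ s, β i * X i ω) ^ 2 ∂μ
      ≤ ∑ i ∈ s, ∑ j ∈ s, r i j * (|β i * σ i| * |β j * σ j|) := by
        rw [hexpand]; exact sum_le_sum fun i hi => sum_le_sum fun j hj => hterm i hi j hj
    _ ≤ ∑ i ∈ s, (β i * σ i) ^ 2 * ∑ j ∈ s, r i j := by
        simpa only [sq_abs] using
          sum_sum_mul_mul_le_sum_sq_mul_sum s hr hr_symm fun i => |β i * σ i|

theorem integral_sq_sum_Ioc_le {X : ℕ → Ω → ℝ} {ρ : ℕ → ℝ} (hρ : ∀ k, 0 ≤ ρ k) (β : ℕ → ℝ)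
    {a b : ℕ} (hb : b ≤ 2 * a) (hX : ∀ i ∈ Ioc a b, MemLp (X i) 2 μ)
    (hcov : ∀ i ∈ Ioc a b, ∀ j ∈ Ioc a b, |∫ ω, X i ω * X j ω ∂μ| ≤
      ρ (Nat.dist i j) * Real.sqrt (variance (X i) μ) * Real.sqrt (variance (X j) μ)) :
    ∫ ω, (∑ i ∈ Ioc a b, β i * X i ω) ^ 2 ∂μ ≤
      ∑ i ∈ Ioc a b, 2 * (β i ^ 2 * variance (X i) μ * ∑ j ∈ range (i + 1), ρ j) := by
  refine (integral_sq_sum_le _ hX (fun i j => hρ _) (fun i j => by rw [Nat.dist_comm]) _ β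
    hcov).trans (sum_le_sum fun i hi => ?_)
  have hsub : Ioc a b ⊆ range (2 * i + 1) := fun j hj => by
    simp only [mem_Ioc, mem_range] at hi hj ⊢
    omega
  have hdist : ∑ j ∈ Ioc a b, ρ (Nat.dist i j) ≤ 2 * ∑ j ∈ range (i + 1), ρ j :=
    (sum_le_sum_of_subset_of_nonneg hsub fun j _ _ => hρ _).trans (sum_range_dist_le hρ i)
  rw [mul_pow, Real.sq_sqrt (variance_nonneg _ _)]
  calc β i ^ 2 * variance (X i) μ * ∑ j ∈ Ioc a b, ρ (Nat.dist i j)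
      ≤ β i ^ 2 * variance (X i) μ * (2 * ∑ j ∈ range (i + 1), ρ j) := by
        gcongr
        exact mul_nonneg (sq_nonneg _) (variance_nonneg _ _)
    _ = _ := by ring

section MaxAbsPartialSum

variable {Y : ℕ → Ω → ℝ} {a b c n : ℕ}

/-- The index set `insert a (Ioc a b)` is `Icc a b` when `a ≤ b`, and is nonempty without that
hypothesis. -/
noncomputable def maxAbsPartialSum (Y : ℕ → Ω → ℝ) (a b : ℕ) : Ω → ℝ :=
  (insert a (Ioc a b)).sup' (insert_nonempty _ _) fun n ω => |∑ i ∈ Ioc a n, Y i ω|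

theorem maxAbsPartialSum_apply (ω : Ω) : maxAbsPartialSum Y a b ω =
    (insert a (Ioc a b)).sup' (insert_nonempty _ _) fun n => |∑ i ∈ Ioc a n, Y i ω| :=
  Finset.sup'_apply _ _ _

theorem abs_sum_Ioc_le_maxAbsPartialSum (han : a ≤ n) (hnb : n ≤ b) (ω : Ω) :
    |∑ i ∈ Ioc a n, Y i ω| ≤ maxAbsPartialSum Y a b ω := by
  rw [maxAbsPartialSum_apply]
  exact le_sup' (fun n => |∑ i ∈ Ioc a n, Y i ω|) (by simp only [mem_insert, mem_Ioc]; omega)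

theorem maxAbsPartialSum_nonneg (ω : Ω) : 0 ≤ maxAbsPartialSum Y a b ω := by
  rw [maxAbsPartialSum_apply]
  exact (abs_nonneg _).trans (le_sup' (fun n => |∑ i ∈ Ioc a n, Y i ω|) (mem_insert_self a _))

theorem maxAbsPartialSum_le {ω : Ω} {t : ℝ} (hab : a ≤ b)
    (h : ∀ n, a ≤ n → n ≤ b → |∑ i ∈ Ioc a n, Y i ω| ≤ t) : maxAbsPartialSum Y a b ω ≤ t := by
  rw [maxAbsPartialSum_apply]
  exact sup'_le _ _ fun n hn => h n (by simp only [mem_insert, mem_Ioc] at hn; omega)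
    (by simp only [mem_insert, mem_Ioc] at hn; omega)

theorem memLp_maxAbsPartialSum (hY : ∀ i ∈ Ioc a b, MemLp (Y i) 2 μ) :
    MemLp (maxAbsPartialSum Y a b) 2 μ := by
  refine sup'_induction _ _ (p := (MemLp · 2 μ)) (fun f hf g hg => hf.sup hg) fun n hn => ?_
  refine (memLp_finsetSum (Ioc a n) fun i hi => hY i ?_).abs
  simp only [mem_insert, mem_Ioc] at hn hi ⊢
  omega

theorem maxAbsPartialSum_le_abs_add_max (hac : a ≤ c) (hcb : c ≤ b) (ω : Ω) :
    maxAbsPartialSum Y a b ω ≤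
      |∑ i ∈ Ioc a c, Y i ω| + max (maxAbsPartialSum Y a c ω) (maxAbsPartialSum Y c b ω) := by
  refine maxAbsPartialSum_le (hac.trans hcb) fun n han hnb => ?_
  rcases le_total n c with hnc | hcn
  · exact (abs_sum_Ioc_le_maxAbsPartialSum han hnc ω).trans
      ((le_max_left _ _).trans (le_add_of_nonneg_left (abs_nonneg _)))
  · rw [← sum_Ioc_consecutive _ hac hcn]
    exact (abs_add_le _ _).trans (add_le_add_right
      ((abs_sum_Ioc_le_maxAbsPartialSum hcn hnb ω).trans (le_max_right _ _)) _)

theorem succ_mul_maxAbsPartialSum_sq_le (p : ℕ) (hac : a ≤ c) (hcb : c ≤ b) (ω : Ω) :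
    (p + 1 : ℝ) * maxAbsPartialSum Y a b ω ^ 2 ≤ (p + 1) * (p + 2) * (∑ i ∈ Ioc a c, Y i ω) ^ 2 +
      (p + 2) * (maxAbsPartialSum Y a c ω ^ 2 + maxAbsPartialSum Y c b ω ^ 2) := by
  set M := maxAbsPartialSum Y
  have hM : 0 ≤ M a b ω := maxAbsPartialSum_nonneg ω
  have hmax : max (M a c ω) (M c b ω) ^ 2 ≤ M a c ω ^ 2 + M c b ω ^ 2 := by
    rcases max_choice (M a c ω) (M c b ω) with h | h <;> rw [h] <;> nlinarith
  calc (p + 1 : ℝ) * M a b ω ^ 2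
      ≤ (p + 1) * (|∑ i ∈ Ioc a c, Y i ω| + max (M a c ω) (M c b ω)) ^ 2 := by
        gcongr
        exact maxAbsPartialSum_le_abs_add_max hac hcb ω
    _ ≤ (p + 1) * (p + 2) * |∑ i ∈ Ioc a c, Y i ω| ^ 2 +
          (p + 2) * max (M a c ω) (M c b ω) ^ 2 :=
        succ_mul_add_sq_le _ _ _
    _ ≤ _ := by rw [sq_abs]; gcongr

theorem integral_maxAbsPartialSum_sq_le {g : ℕ → ℝ} (p : ℕ) (hab : a ≤ b) (hbp : b ≤ a + 2 ^ p)
    (hY : ∀ i ∈ Ioc a b, MemLp (Y i) 2 μ)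
    (hvar : ∀ c d, a ≤ c → c ≤ d → d ≤ b →
      ∫ ω, (∑ i ∈ Ioc c d, Y i ω) ^ 2 ∂μ ≤ ∑ i ∈ Ioc c d, g i) :
    ∫ ω, maxAbsPartialSum Y a b ω ^ 2 ∂μ ≤ ((p : ℝ) + 1) ^ 2 * ∑ i ∈ Ioc a b, g i := by
  induction p generalizing a b with
  | zero =>
    have hM : ∀ ω, maxAbsPartialSum Y a b ω ^ 2 ≤ (∑ i ∈ Ioc a b, Y i ω) ^ 2 := fun ω => by
      rw [← sq_abs (∑ i ∈ Ioc a b, Y i ω)]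
      refine pow_le_pow_left₀ (maxAbsPartialSum_nonneg ω)
        (maxAbsPartialSum_le hab fun n han hnb => ?_) 2
      rcases (show n = a ∨ n = b by omega) with rfl | rfl
      · simp
      · exact le_rfl
    calc ∫ ω, maxAbsPartialSum Y a b ω ^ 2 ∂μ ≤ ∫ ω, (∑ i ∈ Ioc a b, Y i ω) ^ 2 ∂μ :=
          integral_mono (memLp_maxAbsPartialSum hY).integrable_sq
            (memLp_finsetSum _ hY).integrable_sq hM
      _ ≤ ∑ i ∈ Ioc a b, g i := hvar a b le_rfl hab le_rfl
      _ = ((0 : ℕ) + 1 : ℝ) ^ 2 * ∑ i ∈ Ioc a b, g i := by simp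
  | succ p ih =>
    -- both `(a, c]` and `(c, b]` have length at most `2 ^ p`
    set c := min b (a + 2 ^ p)
    have hac : a ≤ c := by omega
    have hcb : c ≤ b := min_le_left _ _
    have hY₁ : ∀ i ∈ Ioc a c, MemLp (Y i) 2 μ := fun i hi => hY i (Ioc_subset_Ioc_right hcb hi)
    have hY₂ : ∀ i ∈ Ioc c b, MemLp (Y i) 2 μ := fun i hi => hY i (Ioc_subset_Ioc_left hac hi)
    have ih₁ := ih hac (min_le_right _ _) hY₁ fun d e hd hde he => hvar d e hd hde (he.trans hcb)
    have ih₂ := ih hcb (by rw [pow_succ] at hbp; omega) hY₂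
      fun d e hd hde he => hvar d e (hac.trans hd) hde he
    have hGac := hvar a c le_rfl hac hcb
    have hGcb := (integral_nonneg fun ω => sq_nonneg _).trans (hvar c b hac hcb le_rfl)
    have hG := sum_Ioc_consecutive g hac hcb
    have hM₁ := (memLp_maxAbsPartialSum hY₁).integrable_sq
    have hM₂ := (memLp_maxAbsPartialSum hY₂).integrable_sq
    have hS := ((memLp_finsetSum _ hY₁).integrable_sq).const_mul ((p + 1) * (p + 2) : ℝ)
    have hR : Integrable (fun ω => (p + 2 : ℝ) *
        (maxAbsPartialSum Y a c ω ^ 2 + maxAbsPartialSum Y c b ω ^ 2)) μ :=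
      (hM₁.add hM₂).const_mul _
    have hint : ∫ ω, (p + 1 : ℝ) * maxAbsPartialSum Y a b ω ^ 2 ∂μ ≤
        ∫ ω, ((p + 1) * (p + 2) * (∑ i ∈ Ioc a c, Y i ω) ^ 2 + (p + 2) *
          (maxAbsPartialSum Y a c ω ^ 2 + maxAbsPartialSum Y c b ω ^ 2)) ∂μ :=
      integral_mono ((memLp_maxAbsPartialSum hY).integrable_sq.const_mul _) (hS.add hR)
        (succ_mul_maxAbsPartialSum_sq_le p hac hcb)
    rw [integral_const_mul, integral_add hS hR, integral_const_mul, integral_const_mul,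
      integral_add hM₁ hM₂] at hint
    refine le_of_mul_le_mul_left (hint.trans ?_) (by positivity : (0 : ℝ) < p + 1)
    push_cast
    rw [← hG]
    nlinarith [ih₁, ih₂, hGac, hGcb]

end MaxAbsPartialSum

theorem ae_exists_tendsto_sum_Icc_of_dyadic_bound {Y : ℕ → Ω → ℝ} {g : ℕ → ℝ}
    (hY : ∀ k, ∀ i ∈ Ioc (2 ^ k) (2 ^ (k + 1)), MemLp (Y i) 2 μ)
    (hvar : ∀ k c d, 2 ^ k ≤ c → c ≤ d → d ≤ 2 ^ (k + 1) →
      ∫ ω, (∑ i ∈ Ioc c d, Y i ω) ^ 2 ∂μ ≤ ∑ i ∈ Ioc c d, g i)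
    (hg : Summable fun k : ℕ => ((k : ℝ) + 1) ^ 2 * ∑ i ∈ Ioc (2 ^ k) (2 ^ (k + 1)), g i) :
    ∀ᵐ ω ∂μ, ∃ l, Tendsto (fun n => ∑ i ∈ Icc 1 n, Y i ω) atTop (𝓝 l) := by
  have hle : ∀ k : ℕ, 2 ^ k ≤ 2 ^ (k + 1) := fun k => Nat.pow_le_pow_right two_pos k.le_succ
  have hmax : ∀ᵐ ω ∂μ, Summable fun k => maxAbsPartialSum Y (2 ^ k) (2 ^ (k + 1)) ω ^ 2 :=
    ae_summable_of_summable_integral (fun k ω => sq_nonneg _)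
      (fun k => (memLp_maxAbsPartialSum (hY k)).integrable_sq)
      (hg.of_nonneg_of_le (fun k => integral_nonneg fun ω => sq_nonneg _) fun k =>
        integral_maxAbsPartialSum_sq_le k (hle k) (by rw [pow_succ, mul_two]) (hY k) (hvar k))
  have hblock : ∀ᵐ ω ∂μ, Summable fun k : ℕ =>
      ((k : ℝ) + 1) ^ 2 * (∑ i ∈ Ioc (2 ^ k) (2 ^ (k + 1)), Y i ω) ^ 2 :=
    ae_summable_of_summable_integral (fun k ω => by positivity)
      (fun k => (memLp_finsetSum _ (hY k)).integrable_sq.const_mul _)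
      (hg.of_nonneg_of_le (fun k => integral_nonneg fun ω => by positivity) fun k => by
        rw [integral_const_mul]
        exact mul_le_mul_of_nonneg_left (hvar k _ _ le_rfl (hle k) le_rfl) (by positivity))
  filter_upwards [hmax, hblock] with ω hmaxω hblockω
  have hosc : Tendsto (fun k => maxAbsPartialSum Y (2 ^ k) (2 ^ (k + 1)) ω) atTop (𝓝 0) := by
    have h := hmaxω.tendsto_atTop_zero.sqrt
    rw [Real.sqrt_zero] at h
    exact h.congr fun k => Real.sqrt_sq (maxAbsPartialSum_nonneg ω)
  have hinv : Summable fun k : ℕ => (((k : ℝ) + 1) ^ 2)⁻¹ := by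
    exact_mod_cast (summable_nat_add_iff 1).2 (Real.summable_nat_pow_inv.2 one_lt_two)
  exact exists_tendsto_sum_Icc_of_dyadic hosc
    (fun k n hkn hnk => abs_sum_Ioc_le_maxAbsPartialSum hkn hnk ω)
    (summable_of_summable_mul_sq (fun k => by positivity) hblockω hinv)

end

theorem stmt_16_general {Ω : Type*} {m0 : MeasurableSpace Ω} (μ : Measure Ω)
    (X : ℕ → Ω → ℝ) (hL2 : ∀ i, 1 ≤ i → MemLp (X i) 2 μ)
    (ρ : ℕ → ℝ) (hρnn : ∀ k, 0 ≤ ρ k)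
    (hcov : ∀ i j, 1 ≤ i → 1 ≤ j →
      |∫ ω, X i ω * X j ω ∂μ| ≤
        ρ (Nat.dist i j) * Real.sqrt (variance (X i) μ) * Real.sqrt (variance (X j) μ))
    (β : ℕ → ℝ)
    (hsum : Summable fun i : ℕ =>
      β i ^ 2 * variance (X i) μ * Real.log i ^ 2 * ∑ j ∈ Finset.range (i + 1), ρ j) :
    ∀ᵐ ω ∂μ, ∃ l : ℝ,
      Filter.Tendsto (fun n => ∑ i ∈ Finset.Icc 1 n, β i * X i ω) Filter.atTop (nhds l) := by
  have hone : ∀ {k c d i : ℕ}, 2 ^ k ≤ c → i ∈ Ioc c d → 1 ≤ i := fun hc hi =>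
    Nat.one_le_two_pow.trans (hc.trans (mem_Ioc.1 hi).1.le)
  refine ae_exists_tendsto_sum_Icc_of_dyadic_bound (Y := fun i ω => β i * X i ω)
    (fun k i hi => (hL2 i (hone le_rfl hi)).const_mul (β i))
    (fun k c d hc _ hd => integral_sq_sum_Ioc_le hρnn β (by rw [pow_succ] at hd; omega)
      (fun i hi => hL2 i (hone hc hi)) fun i hi j hj => hcov i j (hone hc hi) (hone hc hj))
    (summable_succ_sq_mul_sum_Ioc_two_pow (fun i => ?_) ((hsum.mul_left 2).congr fun i => by ring))
  have hρsum := sum_nonneg fun j (_ : j ∈ range (i + 1)) => hρnn j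
  have hvar := variance_nonneg (X i) μ
  positivity

/-- Rademacher–Menchoff for quasi-stationary sequences.  Let
`(X_n)_{n≥1}` be square-integrable with `E X_i = 0` and
`|Cov(X_i, X_j)| ≤ ρ(|i−j|) √(Var X_i) √(Var X_j)` where `ρ ≥ 0`, `ρ(0) = 1`.  If
`∑_{i≥2} β_i² Var(X_i) (log i)² (∑_{j=0}^i ρ(j)) < ∞`, then `∑_{i≥1} β_i X_i` converges
almost surely. -/
theorem stmt_16 {Ω : Type*} {m0 : MeasurableSpace Ω} (μ : Measure Ω) [IsProbabilityMeasure μ]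
    (X : ℕ → Ω → ℝ) (hL2 : ∀ i, 1 ≤ i → MemLp (X i) 2 μ)
    (hmean : ∀ i, 1 ≤ i → ∫ ω, X i ω ∂μ = 0)
    (ρ : ℕ → ℝ) (hρnn : ∀ k, 0 ≤ ρ k) (hρ0 : ρ 0 = 1)
    (hcov : ∀ i j, 1 ≤ i → 1 ≤ j →
      |∫ ω, X i ω * X j ω ∂μ| ≤
        ρ (Nat.dist i j) * Real.sqrt (variance (X i) μ) * Real.sqrt (variance (X j) μ))
    (β : ℕ → ℝ)
    (hsum : Summable fun i : ℕ =>
      β i ^ 2 * variance (X i) μ * Real.log i ^ 2 * ∑ j ∈ Finset.range (i + 1), ρ j) :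
    ∀ᵐ ω ∂μ, ∃ l : ℝ,
      Filter.Tendsto (fun n => ∑ i ∈ Finset.Icc 1 n, β i * X i ω) Filter.atTop (nhds l) :=
  stmt_16_general (m0 := m0) μ X hL2 ρ hρnn hcov β hsum
end

section
/- Let m ≥ 1 and let f : ℝ^m → ℝ^m be a function for which there exist θ ∈ ℝ^m and δ > 0 such that ⟨x − θ, f(x)⟩ ≥ δ‖x − θ‖² for all x ∈ ℝ^m, and there exist κ₁, κ₂ > 0 such that ‖f(x)‖ ≤ κ₁‖x − θ‖ + κ₂ for all x. Let (μ_n)_{n≥0} be a normal sequence and let (ξ_n)_{n≥1} be random vectors in ℝ^m such that the series ∑_{i≥0} μ_i ξ_{i+1} converges almost surely. Then the Robbins–Monro procedure x_0 = x0 (a fixed starting point), x_{n+1} = x_n − μ_n (f(x_n) + ξ_{n+1}), converges to θ almost surely. -/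
/-!
The tail `Tₙ = ∑_{i ≥ n} μᵢ ξᵢ₊₁` of the noise series tends to `0` almost surely, and
`wₙ = xₙ - Tₙ - θ` follows the noise-free recursion `wₙ₊₁ = wₙ - μₙ f(xₙ)` with
`xₙ = wₙ + Tₙ + θ`. Coercivity and linear growth of `f` give
`‖wₙ₊₁‖² ≤ (1 - δ μₙ) ‖wₙ‖² + μₙ γₙ` eventually, with `γₙ → 0`, and since `∑ μₙ = ∞`
this contraction forces `‖wₙ‖² → 0`.
-/

open Filter Finset MeasureTheory Topology

section RealSequences

variable {μ γ a b : ℕ → ℝ}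

/-- `b` decreases to some `L ≥ 0`; if `L > 0`, step `n` removes at least `μₙ L`, and these
cannot add up to infinity. -/
theorem tendsto_zero_of_le_one_sub_mul_self (hμ : ∀ n, 0 ≤ μ n) (hμs : ¬Summable μ)
    (hb : ∀ n, 0 ≤ b n) (hrec : ∀ n, b (n + 1) ≤ (1 - μ n) * b n) :
    Tendsto b atTop (𝓝 0) := by
  have hanti : Antitone b :=
    antitone_nat_of_succ_le fun n => by nlinarith [hrec n, mul_nonneg (hμ n) (hb n)]
  have hlim := tendsto_atTop_ciInf hanti ⟨0, by rintro _ ⟨n, rfl⟩; exact hb n⟩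
  suffices hL : ⨅ n, b n = 0 by rwa [hL] at hlim
  refine le_antisymm (not_lt.1 fun hL => hμs ?_) (le_ciInf hb)
  have htel : ∀ n, ∑ i ∈ range n, μ i * ⨅ k, b k ≤ b 0 - b n := by
    intro n
    induction n with
    | zero => simp
    | succ n ih =>
      have hinf : μ n * ⨅ k, b k ≤ μ n * b n :=
        mul_le_mul_of_nonneg_left (ciInf_le ⟨0, by rintro _ ⟨k, rfl⟩; exact hb k⟩ n) (hμ n)
      rw [sum_range_succ]
      linarith [hrec n]
  refine (summable_mul_right_iff hL.ne').1 <|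
    summable_of_sum_range_le (c := b 0) (fun n => mul_nonneg (hμ n) hL.le) fun n => ?_
  linarith [htel n, hb n]

theorem tendsto_zero_of_eventually_le_one_sub_mul_self (hμ : ∀ n, 0 ≤ μ n)
    (hμs : ¬Summable μ) (hb : ∀ n, 0 ≤ b n)
    (hrec : ∀ᶠ n in atTop, b (n + 1) ≤ (1 - μ n) * b n) :
    Tendsto b atTop (𝓝 0) := by
  obtain ⟨N, hN⟩ := eventually_atTop.1 hrec
  rw [← tendsto_add_atTop_iff_nat N]
  refine tendsto_zero_of_le_one_sub_mul_self (μ := fun n => μ (n + N)) (fun n => hμ _)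
    ((summable_nat_add_iff N).not.2 hμs) (fun n => hb _) fun n => ?_
  simpa only [add_right_comm] using hN (n + N) (Nat.le_add_left N n)

/-- Applied to `max (aₙ - ε) 0`, which contracts by `1 - c μₙ` once `γₙ < c ε`. -/
theorem tendsto_zero_of_le_one_sub_mul_add_s17 {c : ℝ} (hc : 0 < c) (hμ : ∀ n, 0 ≤ μ n)
    (hμs : ¬Summable μ) (hμ0 : Tendsto μ atTop (𝓝 0)) (hγ : Tendsto γ atTop (𝓝 0))
    (ha : ∀ n, 0 ≤ a n) (hrec : ∀ᶠ n in atTop, a (n + 1) ≤ (1 - c * μ n) * a n + μ n * γ n) :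
    Tendsto a atTop (𝓝 0) := by
  refine tendsto_order.2 ⟨fun e he => .of_forall fun n => he.trans_le (ha n), fun e he => ?_⟩
  have hε : 0 < e / 2 := half_pos he
  have hb : Tendsto (fun n => max (a n - e / 2) 0) atTop (𝓝 0) := by
    refine tendsto_zero_of_eventually_le_one_sub_mul_self (μ := fun n => c * μ n)
      (fun n => mul_nonneg hc.le (hμ n)) ((summable_mul_left_iff hc.ne').not.2 hμs)
      (fun n => le_max_right _ _) ?_
    have hcμ : ∀ᶠ n in atTop, c * μ n < 1 :=
      (hμ0.const_mul c).eventually_lt_const (by rw [mul_zero]; exact one_pos)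
    filter_upwards [hrec, hγ.eventually_lt_const (mul_pos hc hε), hcμ] with n hn hγn hμn
    have hfac : 0 ≤ 1 - c * μ n := sub_nonneg.2 hμn.le
    have hshift : a (n + 1) - e / 2 ≤ (1 - c * μ n) * (a n - e / 2) := by
      nlinarith [mul_le_mul_of_nonneg_left hγn.le (hμ n)]
    exact max_le (hshift.trans (mul_le_mul_of_nonneg_left (le_max_left _ _) hfac))
      (mul_nonneg hfac (le_max_right _ _))
  filter_upwards [hb.eventually_lt_const hε] with n hn
  linarith [le_max_left (a n - e / 2) 0]

end RealSequences

section PerturbedIteration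

variable {E : Type*} [NormedAddCommGroup E] [InnerProductSpace ℝ E] {f : E → E} {θ : E}
  {δ κ₁ κ₂ : ℝ}

theorem norm_sq_sub_smul_le (hδ : 0 ≤ δ) (hf1 : ∀ x, δ * ‖x - θ‖ ^ 2 ≤ inner ℝ (x - θ) (f x))
    (hκ₁ : 0 ≤ κ₁) (hf2 : ∀ x, ‖f x‖ ≤ κ₁ * ‖x - θ‖ + κ₂) (w T : E) {μ : ℝ} (hμ : 0 ≤ μ) :
    ‖w - μ • f (w + T + θ)‖ ^ 2 ≤
      (1 - μ * (2 * δ - ((2 * δ + κ₁) * ‖T‖ + 2 * κ₁ ^ 2 * μ))) * ‖w‖ ^ 2 +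
        μ * ((2 * δ + κ₁ + 2 * (κ₁ * ‖T‖ + κ₂)) * ‖T‖ + 2 * (κ₁ * ‖T‖ + κ₂) ^ 2 * μ) := by
  have hx : w + T + θ - θ = w + T := add_sub_cancel_right _ _
  set F := f (w + T + θ)
  set v := ‖w‖
  set t := ‖T‖
  set D := κ₁ * t + κ₂
  have hinner : δ * (v ^ 2 - 2 * v * t) - t * ‖F‖ ≤ inner ℝ w F := by
    have hcoer := hf1 (w + T + θ)
    rw [hx, norm_add_sq_real, inner_add_left] at hcoer
    have hwT := neg_le_of_abs_le (abs_real_inner_le_norm w T)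
    nlinarith [real_inner_le_norm T F, mul_le_mul_of_nonneg_left hwT hδ,
      mul_nonneg hδ (sq_nonneg t)]
  have hF : ‖F‖ ≤ κ₁ * v + D := by
    have hgrowth := hf2 (w + T + θ)
    rw [hx] at hgrowth
    nlinarith [mul_le_mul_of_nonneg_left (norm_add_le w T) hκ₁]
  have hF2 : ‖F‖ ^ 2 ≤ 2 * κ₁ ^ 2 * v ^ 2 + 2 * D ^ 2 := by
    nlinarith [pow_le_pow_left₀ (norm_nonneg F) hF 2, sq_nonneg (κ₁ * v - D)]
  have ht : 0 ≤ t := norm_nonneg T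
  rw [norm_sub_sq_real, real_inner_smul_right, norm_smul, Real.norm_of_nonneg hμ]
  -- `2 v t ≤ t (1 + v²)` absorbs the cross terms into `‖T‖ (1 + ‖w‖²)`
  nlinarith [mul_le_mul_of_nonneg_left hinner (by positivity : 0 ≤ 2 * μ),
    mul_le_mul_of_nonneg_left hF2 (sq_nonneg μ),
    mul_le_mul_of_nonneg_left hF (by positivity : 0 ≤ 2 * μ * t),
    mul_nonneg (mul_nonneg (mul_nonneg hδ hμ) ht) (sq_nonneg (v - 1)),
    mul_nonneg (mul_nonneg (mul_nonneg hκ₁ hμ) ht) (sq_nonneg (v - 1))]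

theorem tendsto_robbinsMonro_of_perturbation_tendsto_zero (hδ : 0 < δ)
    (hf1 : ∀ x, δ * ‖x - θ‖ ^ 2 ≤ inner ℝ (x - θ) (f x)) (hκ₁ : 0 ≤ κ₁)
    (hf2 : ∀ x, ‖f x‖ ≤ κ₁ * ‖x - θ‖ + κ₂) {μ : ℕ → ℝ} (hμ : ∀ n, 0 ≤ μ n)
    (hμs : ¬Summable μ) (hμ0 : Tendsto μ atTop (𝓝 0)) {x T : ℕ → E}
    (hT : Tendsto T atTop (𝓝 0)) (hrec : ∀ n, x (n + 1) - T (n + 1) = x n - T n - μ n • f (x n)) :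
    Tendsto x atTop (𝓝 θ) := by
  set w := fun n => x n - T n - θ
  have hx : ∀ n, w n + T n + θ = x n := fun n => by simp only [w]; abel
  have ht : Tendsto (fun n => ‖T n‖) atTop (𝓝 0) := by simpa using hT.norm
  have hβ : ∀ᶠ n in atTop, (2 * δ + κ₁) * ‖T n‖ + 2 * κ₁ ^ 2 * μ n < δ :=
    Tendsto.eventually_lt_const hδ (by simpa using (ht.const_mul _).add (hμ0.const_mul _))
  have hγ : Tendsto (fun n => (2 * δ + κ₁ + 2 * (κ₁ * ‖T n‖ + κ₂)) * ‖T n‖ +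
      2 * (κ₁ * ‖T n‖ + κ₂) ^ 2 * μ n) atTop (𝓝 0) := by
    have hD := (ht.const_mul κ₁).add_const κ₂
    simpa using (((hD.const_mul 2).const_add (2 * δ + κ₁)).mul ht).add
      (((hD.pow 2).const_mul 2).mul hμ0)
  have hw2 : Tendsto (fun n => ‖w n‖ ^ 2) atTop (𝓝 0) := by
    refine tendsto_zero_of_le_one_sub_mul_add_s17 hδ hμ hμs hμ0 hγ (fun n => sq_nonneg _) ?_
    filter_upwards [hβ] with n hn
    have hw : w (n + 1) = w n - μ n • f (w n + T n + θ) := by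
      rw [hx]
      simp only [w, hrec]
      abel
    rw [hw]
    refine (norm_sq_sub_smul_le hδ.le hf1 hκ₁ hf2 (w n) (T n) (hμ n)).trans ?_
    have hcontr : 1 - μ n * (2 * δ - ((2 * δ + κ₁) * ‖T n‖ + 2 * κ₁ ^ 2 * μ n)) ≤ 1 - δ * μ n := by
      nlinarith [mul_le_mul_of_nonneg_left hn.le (hμ n)]
    exact add_le_add (mul_le_mul_of_nonneg_right hcontr (sq_nonneg _)) le_rfl
  have hw : Tendsto w atTop (𝓝 0) := by
    refine tendsto_zero_iff_norm_tendsto_zero.2 ?_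
    simpa [Real.sqrt_sq (norm_nonneg _)] using hw2.sqrt
  simpa [hx] using (hw.add hT).add_const θ

end PerturbedIteration

theorem NormalSeq.pos {μ : ℕ → ℝ} (h : NormalSeq μ) (n : ℕ) : 0 < μ n := by
  rcases n with _ | n
  · rw [h.1]; exact one_pos
  · exact (h.2.1 (n + 1) n.succ_pos).1

theorem NormalSeq.not_summable {μ : ℕ → ℝ} (h : NormalSeq μ) : ¬Summable μ :=
  (not_summable_iff_tendsto_nat_atTop_of_nonneg fun n => (h.pos n).le).2 h.2.2.1

theorem stmt_17_general (m : ℕ)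
    (f : EuclideanSpace ℝ (Fin m) → EuclideanSpace ℝ (Fin m))
    (θ : EuclideanSpace ℝ (Fin m)) (δ : ℝ) (hδ : 0 < δ)
    (hf1 : ∀ x, δ * ‖x - θ‖ ^ 2 ≤ (inner ℝ (x - θ) (f x) : ℝ))
    (κ₁ κ₂ : ℝ) (hκ₁ : 0 < κ₁)
    (hf2 : ∀ x, ‖f x‖ ≤ κ₁ * ‖x - θ‖ + κ₂)
    (μs : ℕ → ℝ) (hμs : NormalSeq μs)
    {Ω : Type*} {m0 : MeasurableSpace Ω} (P : Measure Ω)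
    (ξ : ℕ → Ω → EuclideanSpace ℝ (Fin m))
    (hser : ∀ᵐ ω ∂P, ∃ l : EuclideanSpace ℝ (Fin m),
      Filter.Tendsto (fun n => ∑ i ∈ Finset.range n, μs i • ξ (i + 1) ω)
        Filter.atTop (nhds l))
    (x : ℕ → Ω → EuclideanSpace ℝ (Fin m))
    (hxrec : ∀ n ω, x (n + 1) ω = x n ω - μs n • (f (x n ω) + ξ (n + 1) ω)) :
    ∀ᵐ ω ∂P, Filter.Tendsto (fun n => x n ω) Filter.atTop (nhds θ) := by
  filter_upwards [hser] with ω ⟨l, hl⟩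
  refine tendsto_robbinsMonro_of_perturbation_tendsto_zero hδ hf1 hκ₁.le hf2
    (fun n => (hμs.pos n).le) hμs.not_summable hμs.2.2.2 (T := fun n => l - ∑ i ∈ range n, μs i • ξ (i + 1) ω)
    (by simpa using hl.const_sub l) fun n => ?_
  rw [hxrec, sum_range_succ, smul_add]
  abel

/-- Robbins–Monro.  Let `f : ℝ^m → ℝ^m` satisfy
`⟨x − θ, f(x)⟩ ≥ δ‖x − θ‖²` and `‖f(x)‖ ≤ κ₁‖x − θ‖ + κ₂`.  Let `(μ_n)` be a normal sequence
and let `(ξ_n)` be random vectors such that `∑ μ_i ξ_{i+1}` converges almost surely.  Then the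
Robbins–Monro procedure `x_{n+1} = x_n − μ_n (f(x_n) + ξ_{n+1})`, `x_0 = x0`, converges to `θ`
almost surely. -/
theorem stmt_17 (m : ℕ) (hm : 1 ≤ m)
    (f : EuclideanSpace ℝ (Fin m) → EuclideanSpace ℝ (Fin m))
    (θ : EuclideanSpace ℝ (Fin m)) (δ : ℝ) (hδ : 0 < δ)
    (hf1 : ∀ x, δ * ‖x - θ‖ ^ 2 ≤ (inner ℝ (x - θ) (f x) : ℝ))
    (κ₁ κ₂ : ℝ) (hκ₁ : 0 < κ₁) (hκ₂ : 0 < κ₂)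
    (hf2 : ∀ x, ‖f x‖ ≤ κ₁ * ‖x - θ‖ + κ₂)
    (μs : ℕ → ℝ) (hμs : NormalSeq μs)
    {Ω : Type*} {m0 : MeasurableSpace Ω} (P : Measure Ω) [IsProbabilityMeasure P]
    (ξ : ℕ → Ω → EuclideanSpace ℝ (Fin m))
    (hser : ∀ᵐ ω ∂P, ∃ l : EuclideanSpace ℝ (Fin m),
      Filter.Tendsto (fun n => ∑ i ∈ Finset.range n, μs i • ξ (i + 1) ω)
        Filter.atTop (nhds l))
    (x0 : EuclideanSpace ℝ (Fin m)) (x : ℕ → Ω → EuclideanSpace ℝ (Fin m))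
    (hx0 : ∀ ω, x 0 ω = x0)
    (hxrec : ∀ n ω, x (n + 1) ω = x n ω - μs n • (f (x n ω) + ξ (n + 1) ω)) :
    ∀ᵐ ω ∂P, Filter.Tendsto (fun n => x n ω) Filter.atTop (nhds θ) :=
  stmt_17_general m f θ δ hδ hf1 κ₁ κ₂ hκ₁ hf2 μs hμs (m0 := m0) P ξ hser x hxrec
end
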